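/- arXiv:1402.0351 — 10 statements merged into one kernel-verified Lean document; each statement's English description precedes it below -/
import Mathlib

section
/- Let (Λ, μ) be a probability space, S a set, and A : S × Λ → {−1, 1}, B : S × Λ → {−1, 1} functions that are measurable in λ for each fixed setting. Define the correlation E(x, y) = ∫_Λ A(x, λ)·B(y, λ) dμ(λ). If E(b, b) = −1 for every b ∈ S (perfect anticorrelation at equal settings), then for all a, b, c ∈ S one has |E(a, b) − E(a, c)| ≤ 1 + E(b, c). -/
/-!
Perfect anticorrelation forces `B b = -A b` almost everywhere. Hence
`E a b - E a c = ∫ A a (B b - B c)`, and for `±1`-valued outcomes `|B b - B c| = 1 - B b B c`,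
so `|E a b - E a c| ≤ ∫ (1 - B b B c) = 1 + ∫ A b B c = 1 + E b c`.
-/

open MeasureTheory

namespace Bell

section Signs

variable {x y : ℝ}

lemma mul_eq_one_or_neg_one (hx : x = 1 ∨ x = -1) (hy : y = 1 ∨ y = -1) :
    x * y = 1 ∨ x * y = -1 := by
  rcases hx with rfl | rfl <;> rcases hy with rfl | rfl <;> norm_num

lemma abs_sub_eq_one_sub_mul (hx : x = 1 ∨ x = -1) (hy : y = 1 ∨ y = -1) :
    |x - y| = 1 - x * y := by
  rcases hx with rfl | rfl <;> rcases hy with rfl | rfl <;> norm_num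

lemma eq_neg_of_mul_eq_neg_one (hx : x = 1 ∨ x = -1) (hxy : x * y = -1) : y = -x := by
  rcases hx with rfl | rfl <;> linarith

end Signs

variable {Λ : Type*} [MeasurableSpace Λ] {μ : Measure Λ}

lemma integrable_of_eq_one_or_neg_one [IsFiniteMeasure μ] {f : Λ → ℝ}
    (hf : ∀ l, f l = 1 ∨ f l = -1) (hfm : Measurable f) : Integrable f μ :=
  .of_bound hfm.aestronglyMeasurable 1 <| .of_forall fun l => by rcases hf l with h | h <;> simp [h]

lemma integrable_mul_of_eq_one_or_neg_one [IsFiniteMeasure μ] {f g : Λ → ℝ}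
    (hf : ∀ l, f l = 1 ∨ f l = -1) (hg : ∀ l, g l = 1 ∨ g l = -1)
    (hfm : Measurable f) (hgm : Measurable g) : Integrable (fun l => f l * g l) μ :=
  integrable_of_eq_one_or_neg_one (fun l => mul_eq_one_or_neg_one (hf l) (hg l)) (hfm.mul hgm)

lemma ae_eq_neg_one_of_integral_eq_neg_one [IsProbabilityMeasure μ] {f : Λ → ℝ}
    (hint : Integrable f μ) (hge : ∀ᵐ l ∂μ, -1 ≤ f l) (hf : ∫ l, f l ∂μ = -1) :
    ∀ᵐ l ∂μ, f l = -1 := by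
  have hnonneg : 0 ≤ᵐ[μ] fun l => f l + 1 := by
    filter_upwards [hge] with l hl
    simp only [Pi.zero_apply]
    linarith
  have hzero : ∫ l, (f l + 1) ∂μ = 0 := by
    rw [integral_add hint (integrable_const 1), hf]
    simp
  filter_upwards [(integral_eq_zero_iff_of_nonneg_ae hnonneg
    (hint.add (integrable_const 1))).mp hzero] with l hl
  have : f l + 1 = 0 := hl
  linarith

end Bell

open Bell

/-- **Bell's original 1964 inequality.**
For a local deterministic model over a setting set `S` — a probability space `(Λ, μ)` with
outcome functions `A B : S → Λ → {−1, 1}`, measurable in `λ` for each setting, and correlation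
`E x y = ∫ A(x,λ)·B(y,λ) dμ(λ)` — if `E b b = −1` for every setting `b` (perfect anticorrelation
at equal settings), then `|E a b − E a c| ≤ 1 + E b c` for all settings `a`, `b`, `c`. -/
theorem bell_1964_inequality
    {Λ : Type*} [MeasurableSpace Λ] (μ : Measure Λ) [IsProbabilityMeasure μ]
    {S : Type*} (A B : S → Λ → ℝ)
    (hA : ∀ x l, A x l = 1 ∨ A x l = -1)
    (hB : ∀ y l, B y l = 1 ∨ B y l = -1)
    (hAm : ∀ x, Measurable (A x))
    (hBm : ∀ y, Measurable (B y))
    (E : S → S → ℝ)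
    (hE : ∀ x y, E x y = ∫ l, A x l * B y l ∂μ)
    (hanti : ∀ b, E b b = -1) :
    ∀ a b c, |E a b - E a c| ≤ 1 + E b c := by
  intro a b c
  have hint (x y : S) : Integrable (fun l => A x l * B y l) μ :=
    integrable_mul_of_eq_one_or_neg_one (hA x) (hB y) (hAm x) (hBm y)
  have hBb : ∀ᵐ l ∂μ, B b l = -A b l := by
    have hprod := ae_eq_neg_one_of_integral_eq_neg_one (hint b b)
      (.of_forall fun l => by rcases mul_eq_one_or_neg_one (hA b l) (hB b l) with h | h <;> simp [h])
      (hE b b ▸ hanti b)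
    filter_upwards [hprod] with l hl
    exact eq_neg_of_mul_eq_neg_one (hA b l) hl
  calc |E a b - E a c| = |∫ l, A a l * (B b l - B c l) ∂μ| := by
        rw [hE, hE, ← integral_sub (hint a b) (hint a c)]
        simp only [mul_sub]
    _ ≤ ∫ l, |A a l * (B b l - B c l)| ∂μ := abs_integral_le_integral_abs
    _ = ∫ l, (1 + A b l * B c l) ∂μ := integral_congr_ae <| by
        filter_upwards [hBb] with l hl
        rw [abs_mul, abs_sub_eq_one_sub_mul (hB b l) (hB c l), hl]
        rcases hA a l with h | h <;> simp [h]
    _ = 1 + E b c := by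
        rw [integral_add (integrable_const 1) (hint b c), hE]
        simp
end

section
/- There do not exist a probability space (Λ, μ) and functions A : S² × Λ → {−1, 1}, B : S² × Λ → {−1, 1} (where S² denotes the set of unit vectors of ℝ³), measurable in λ for each setting, such that ∫_Λ A(a, λ)·B(b, λ) dμ(λ) = −⟨a, b⟩ for all unit vectors a, b ∈ ℝ³. That is, no local deterministic hidden-variable model reproduces the quantum singlet-state correlations E(a, b) = −⟨a, b⟩. -/
/-!
Clauser–Horne–Shimony–Holt: for values in `[-1, 1]`,
`a b + a b' + a' b - a' b' = a (b + b') + a' (b - b')` has absolute value at most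
`|b + b'| + |b - b'| ≤ 2`. Averaging over the hidden variable, the correlations of a local
deterministic model obey the same bound. The singlet correlations `-⟪a, b⟫` break it: for
orthonormal `u, v`, the settings `a = u`, `a' = v`, `b, b' = (u ± v) / √2` give `2 √2`.
-/

open MeasureTheory
open scoped RealInnerProductSpace

theorem abs_chsh_le_two {a a' b b' : ℝ} (ha : |a| ≤ 1) (ha' : |a'| ≤ 1) (hb : |b| ≤ 1)
    (hb' : |b'| ≤ 1) : |a * b + a * b' + a' * b - a' * b'| ≤ 2 :=
  calc |a * b + a * b' + a' * b - a' * b'| = |a * (b + b') + a' * (b - b')| := by ring_nf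
    _ ≤ |a| * |b + b'| + |a'| * |b - b'| := by
      rw [← abs_mul, ← abs_mul]
      exact abs_add_le _ _
    _ ≤ |b + b'| + |b - b'| := by gcongr <;> exact mul_le_of_le_one_left (abs_nonneg _) ‹_›
    _ ≤ 2 := by
      rw [abs_le] at hb hb'
      cases abs_cases (b + b') <;> cases abs_cases (b - b') <;> linarith

section Correlation

variable {X Y Λ : Type*} [MeasurableSpace Λ]

noncomputable def correlation (μ : Measure Λ) (A : X → Λ → ℝ) (B : Y → Λ → ℝ) (x : X) (y : Y) :
    ℝ :=
  ∫ l, A x l * B y l ∂μ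

theorem abs_chsh_correlation_le_two (μ : Measure Λ) [IsProbabilityMeasure μ]
    {A : X → Λ → ℝ} {B : Y → Λ → ℝ} (hA : ∀ x l, |A x l| ≤ 1) (hB : ∀ y l, |B y l| ≤ 1)
    (hAm : ∀ x, AEStronglyMeasurable (A x) μ) (hBm : ∀ y, AEStronglyMeasurable (B y) μ)
    (x x' : X) (y y' : Y) :
    |correlation μ A B x y + correlation μ A B x y' + correlation μ A B x' y
      - correlation μ A B x' y'| ≤ 2 := by
  have hint : ∀ x y, Integrable (fun l ↦ A x l * B y l) μ := fun x y ↦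
    .of_bound ((hAm x).mul (hBm y)) 1 <| ae_of_all _ fun l ↦ by
      rw [Real.norm_eq_abs, abs_mul]
      exact mul_le_one₀ (hA x l) (abs_nonneg _) (hB y l)
  have hsum : correlation μ A B x y + correlation μ A B x y' + correlation μ A B x' y
      - correlation μ A B x' y'
      = ∫ l, (A x l * B y l + A x l * B y' l + A x' l * B y l - A x' l * B y' l) ∂μ := by
    rw [integral_sub, integral_add, integral_add]
    · rfl
    all_goals apply_rules [Integrable.add]
  have hpt : ∀ l, ‖A x l * B y l + A x l * B y' l + A x' l * B y l - A x' l * B y' l‖ ≤ 2 :=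
    fun l ↦ abs_chsh_le_two (hA x l) (hA x' l) (hB y l) (hB y' l)
  rw [hsum, ← Real.norm_eq_abs]
  simpa using norm_integral_le_of_norm_le_const (ae_of_all μ hpt)

end Correlation

theorem exists_unit_vectors_chsh_eq_two_sqrt_two {E : Type*} [NormedAddCommGroup E]
    [InnerProductSpace ℝ E] {u v : E} (hu : ‖u‖ = 1) (hv : ‖v‖ = 1) (huv : ⟪u, v⟫ = 0) :
    ∃ a a' b b' : {w : E // ‖w‖ = 1},
      ⟪(a : E), b⟫ + ⟪(a : E), b'⟫ + ⟪(a' : E), b⟫ - ⟪(a' : E), b'⟫ = 2 * √2 := by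
  have hsqrt : √2 ^ 2 = 2 := Real.sq_sqrt zero_le_two
  have hunit : ∀ w : E, ‖w‖ ^ 2 = 2 → ‖(√2)⁻¹ • w‖ = 1 := fun w hw ↦ by
    rw [norm_smul, Real.norm_eq_abs, abs_inv, abs_of_nonneg (Real.sqrt_nonneg _),
      ← Real.sqrt_sq (norm_nonneg w), hw, inv_mul_cancel₀ (by positivity)]
  refine ⟨⟨u, hu⟩, ⟨v, hv⟩, ⟨_, hunit (u + v) ?_⟩, ⟨_, hunit (u - v) ?_⟩, ?_⟩
  · rw [norm_add_sq_real, hu, hv, huv]; norm_num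
  · rw [norm_sub_sq_real, hu, hv, huv]; norm_num
  · simp only [inner_smul_right, inner_add_right, inner_sub_right, real_inner_self_eq_norm_sq,
      real_inner_comm u v, hu, hv, huv]
    field_simp
    linarith

/-- **Bell's 1964 theorem.**
No local deterministic hidden-variable model reproduces the quantum singlet-state
correlations `E(a,b) = −⟨a,b⟩`: for every probability space `(Λ, μ)` and functions
`A B : S² × Λ → {−1, 1}` (where `S²` is the set of unit vectors of `ℝ³`), measurable in `λ`
for each setting, it is not the case that `∫ A(a,λ)·B(b,λ) dμ(λ) = −⟨a,b⟩` for all unit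
vectors `a`, `b`. -/
theorem bell_1964_no_local_deterministic_model
    {Λ : Type*} [MeasurableSpace Λ] (μ : Measure Λ) [IsProbabilityMeasure μ]
    (A B : {v : EuclideanSpace ℝ (Fin 3) // ‖v‖ = 1} → Λ → ℝ)
    (hA : ∀ x l, A x l = 1 ∨ A x l = -1)
    (hB : ∀ y l, B y l = 1 ∨ B y l = -1)
    (hAm : ∀ x, Measurable (A x))
    (hBm : ∀ y, Measurable (B y)) :
    ¬ ∀ (a b : {v : EuclideanSpace ℝ (Fin 3) // ‖v‖ = 1}),
        (∫ l, A a l * B b l ∂μ)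
          = -⟪(a : EuclideanSpace ℝ (Fin 3)), (b : EuclideanSpace ℝ (Fin 3))⟫ := by
  intro hsinglet
  have habs_le_one : ∀ {z : ℝ}, z = 1 ∨ z = -1 → |z| ≤ 1 := by
    rintro z (rfl | rfl) <;> norm_num
  obtain ⟨a, a', b, b', hviolation⟩ := exists_unit_vectors_chsh_eq_two_sqrt_two
    (u := EuclideanSpace.single (0 : Fin 3) (1 : ℝ)) (v := EuclideanSpace.single 1 1)
    (by simp) (by simp) (by simp [EuclideanSpace.inner_single_left])
  have hchsh := abs_chsh_correlation_le_two μ (fun x l ↦ habs_le_one (hA x l))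
    (fun y l ↦ habs_le_one (hB y l)) (fun x ↦ (hAm x).aestronglyMeasurable)
    (fun y ↦ (hBm y).aestronglyMeasurable) a a' b b'
  simp only [correlation, hsinglet] at hchsh
  rw [abs_le] at hchsh
  linarith [hchsh.1, Real.one_lt_sqrt_two]
end

section
/- Let (Λ, μ) be a probability space and Ā : S_A × Λ → [−1, 1], B̄ : S_B × Λ → [−1, 1] be functions measurable in λ for each setting, and define E(a, b) = ∫_Λ Ā(a, λ)·B̄(b, λ) dμ(λ). Then for all a, a′ ∈ S_A and b, b′ ∈ S_B: |E(a, b) + E(a, b′) + E(a′, b) − E(a′, b′)| ≤ 2. -/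
/-! For each hidden variable `λ` the CHSH combination
`x (y + y') + x' (y - y')` of numbers in `[-1, 1]` has absolute value at most
`|y + y'| + |y - y'| ≤ 2`; integrating this pointwise bound against the probability measure `μ` gives the inequality. -/

open MeasureTheory

theorem abs_chsh_le_two_s3 {x x' y y' : ℝ} (hx : |x| ≤ 1) (hx' : |x'| ≤ 1) (hy : |y| ≤ 1)
    (hy' : |y'| ≤ 1) : |x * y + x * y' + x' * y - x' * y'| ≤ 2 := by
  have hsum : |y + y'| + |y - y'| ≤ 2 := by
    rw [abs_le] at hy hy'
    rcases abs_cases (y + y') with ⟨h, _⟩ | ⟨h, _⟩ <;>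
      rcases abs_cases (y - y') with ⟨h', _⟩ | ⟨h', _⟩ <;> linarith
  calc |x * y + x * y' + x' * y - x' * y'| = |x * (y + y') + x' * (y - y')| := by ring_nf
    _ ≤ |x| * |y + y'| + |x'| * |y - y'| := by
      simpa only [abs_mul] using abs_add_le (x * (y + y')) (x' * (y - y'))
    _ ≤ 1 * |y + y'| + 1 * |y - y'| := by gcongr
    _ ≤ 2 := by linarith

section

variable {Λ : Type*} [MeasurableSpace Λ] {μ : Measure Λ}

theorem integrable_mul_of_abs_le_one [IsFiniteMeasure μ] {f g : Λ → ℝ} (hfm : Measurable f)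
    (hgm : Measurable g) (hf : ∀ l, |f l| ≤ 1) (hg : ∀ l, |g l| ≤ 1) :
    Integrable (fun l => f l * g l) μ :=
  Integrable.of_bound (hfm.mul hgm).aestronglyMeasurable 1 <| ae_of_all _ fun l => by
    simpa only [Real.norm_eq_abs, abs_mul] using mul_le_one₀ (hf l) (abs_nonneg _) (hg l)

theorem abs_chsh_integral_le_two [IsProbabilityMeasure μ] {A A' B B' : Λ → ℝ}
    (hAm : Measurable A) (hA'm : Measurable A') (hBm : Measurable B) (hB'm : Measurable B')
    (hA : ∀ l, |A l| ≤ 1) (hA' : ∀ l, |A' l| ≤ 1) (hB : ∀ l, |B l| ≤ 1) (hB' : ∀ l, |B' l| ≤ 1) :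
    |∫ l, A l * B l ∂μ + ∫ l, A l * B' l ∂μ + ∫ l, A' l * B l ∂μ - ∫ l, A' l * B' l ∂μ| ≤ 2 := by
  have hAB := integrable_mul_of_abs_le_one (μ := μ) hAm hBm hA hB
  have hAB' := integrable_mul_of_abs_le_one (μ := μ) hAm hB'm hA hB'
  have hA'B := integrable_mul_of_abs_le_one (μ := μ) hA'm hBm hA' hB
  have hA'B' := integrable_mul_of_abs_le_one (μ := μ) hA'm hB'm hA' hB'
  rw [← integral_add hAB hAB', ← integral_add (by fun_prop) hA'B,
    ← integral_sub (by fun_prop) hA'B']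
  simpa using norm_integral_le_of_norm_le_const (μ := μ) <| ae_of_all _ fun l =>
    (Real.norm_eq_abs _).trans_le (abs_chsh_le_two_s3 (hA l) (hA' l) (hB l) (hB' l))

end

/-- **The CHSH inequality** for correlations of Bell's 1971 form
("indeterminism with a certain local character"): if `(Λ, μ)` is a probability space and
`Ā : S_A × Λ → [−1,1]`, `B̄ : S_B × Λ → [−1,1]` are measurable in `λ` for each setting, then
the correlations `E(a,b) = ∫ Ā(a,λ)·B̄(b,λ) dμ(λ)` satisfy
`|E(a,b) + E(a,b′) + E(a′,b) − E(a′,b′)| ≤ 2`. -/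
theorem chsh_inequality
    {Λ : Type*} [MeasurableSpace Λ] (μ : Measure Λ) [IsProbabilityMeasure μ]
    {SA SB : Type*} (Abar : SA → Λ → ℝ) (Bbar : SB → Λ → ℝ)
    (hA : ∀ a l, |Abar a l| ≤ 1)
    (hB : ∀ b l, |Bbar b l| ≤ 1)
    (hAm : ∀ a, Measurable (Abar a))
    (hBm : ∀ b, Measurable (Bbar b))
    (E : SA → SB → ℝ)
    (hE : ∀ a b, E a b = ∫ l, Abar a l * Bbar b l ∂μ) :
    ∀ a a' b b', |E a b + E a b' + E a' b - E a' b'| ≤ 2 := by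
  intro a a' b b'
  simp only [hE]
  exact abs_chsh_integral_le_two (hAm a) (hAm a') (hBm b) (hBm b') (hA a) (hA a') (hB b) (hB b')
end

section
/- There exist unit vectors a, a′, b, b′ ∈ ℝ³ such that, for the singlet correlation function E(x, y) = −⟨x, y⟩, one has |E(a, b) + E(a, b′) + E(a′, b) − E(a′, b′)| = 2·√2. In particular the singlet correlations violate the CHSH bound of 2 satisfied by all factorizable models. -/
open scoped RealInnerProductSpace

/-! Tsirelson's choice: for orthonormal `a, a'` take `b = -(a + a')/√2` and `b' = -(a - a')/√2`.
Then `b + b' = -√2 a` and `b - b' = -√2 a'`, and the CHSH combination, which equals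
`-⟪a, b + b'⟫ - ⟪a', b - b'⟫`, becomes `√2 ‖a‖² + √2 ‖a'‖² = 2√2`. -/

section InnerProductSpace

variable {F : Type*} [SeminormedAddCommGroup F] [InnerProductSpace ℝ F]

theorem singlet_chsh_eq_neg_inner_add_sub (a a' b b' : F) :
    (-⟪a, b⟫) + (-⟪a, b'⟫) + (-⟪a', b⟫) - (-⟪a', b'⟫) = -⟪a, b + b'⟫ - ⟪a', b - b'⟫ := by
  rw [inner_add_right, inner_sub_right]
  ring

theorem norm_inv_sqrt_two_smul_of_norm_sq_eq_two {v : F} (hv : ‖v‖ * ‖v‖ = 2) :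
    ‖-((√2)⁻¹ • v)‖ = 1 := by
  have hv' : ‖v‖ = √2 := by
    rw [← hv, Real.sqrt_mul_self (norm_nonneg v)]
  rw [norm_neg, norm_smul, hv', norm_inv, Real.norm_of_nonneg (Real.sqrt_nonneg 2),
    inv_mul_cancel₀ (by positivity)]

theorem exists_singlet_chsh_eq_two_sqrt_two {a a' : F} (ha : ‖a‖ = 1) (ha' : ‖a'‖ = 1)
    (h : ⟪a, a'⟫ = 0) :
    ∃ b b' : F, ‖b‖ = 1 ∧ ‖b'‖ = 1 ∧
      (-⟪a, b⟫) + (-⟪a, b'⟫) + (-⟪a', b⟫) - (-⟪a', b'⟫) = 2 * √2 := by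
  have hnorm_add : ‖a + a'‖ * ‖a + a'‖ = 2 := by
    rw [norm_add_sq_eq_norm_sq_add_norm_sq_real h, ha, ha']
    norm_num
  have hnorm_sub : ‖a - a'‖ * ‖a - a'‖ = 2 := by
    rw [norm_sub_sq_eq_norm_sq_add_norm_sq_real h, ha, ha']
    norm_num
  have hsqrt : (√2)⁻¹ * 2 = √2 := by
    field_simp
    exact (Real.sq_sqrt zero_le_two).symm
  refine ⟨-((√2)⁻¹ • (a + a')), -((√2)⁻¹ • (a - a')),
    norm_inv_sqrt_two_smul_of_norm_sq_eq_two hnorm_add,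
    norm_inv_sqrt_two_smul_of_norm_sq_eq_two hnorm_sub, ?_⟩
  have hsum : -((√2)⁻¹ • (a + a')) + -((√2)⁻¹ • (a - a')) = -(√2 • a) := by
    rw [← neg_add, ← smul_add, show a + a' + (a - a') = (2 : ℝ) • a by module, smul_smul, hsqrt]
  have hdiff : -((√2)⁻¹ • (a + a')) - -((√2)⁻¹ • (a - a')) = -(√2 • a') := by
    rw [neg_sub_neg, ← smul_sub, show a - a' - (a + a') = -((2 : ℝ) • a') by module, smul_neg,
      smul_smul, hsqrt]
  rw [singlet_chsh_eq_neg_inner_add_sub, hsum, hdiff, inner_neg_right, inner_neg_right,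
    real_inner_smul_right, real_inner_smul_right, real_inner_self_eq_norm_sq,
    real_inner_self_eq_norm_sq, ha, ha']
  ring

end InnerProductSpace

/-- There exist unit vectors `a, a′, b, b′ ∈ ℝ³` for which the singlet correlation function
`E(x,y) = −⟨x,y⟩` attains the CHSH value `|E(a,b) + E(a,b′) + E(a′,b) − E(a′,b′)| = 2√2`,
violating the CHSH bound of `2` satisfied by all factorizable models. -/
theorem singlet_violates_chsh :
    ∃ a a' b b' : EuclideanSpace ℝ (Fin 3),
      ‖a‖ = 1 ∧ ‖a'‖ = 1 ∧ ‖b‖ = 1 ∧ ‖b'‖ = 1 ∧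
      |(-⟪a, b⟫) + (-⟪a, b'⟫) + (-⟪a', b⟫) - (-⟪a', b'⟫)| = 2 * Real.sqrt 2 := by
  have hon := EuclideanSpace.orthonormal_single (ι := Fin 3) (𝕜 := ℝ)
  obtain ⟨b, b', hb, hb', hchsh⟩ :=
    exists_singlet_chsh_eq_two_sqrt_two (hon.1 0) (hon.1 1) (hon.2 (by decide : (0 : Fin 3) ≠ 1))
  refine ⟨_, _, b, b', hon.1 0, hon.1 1, hb, hb', ?_⟩
  rw [hchsh, abs_of_pos (by positivity)]
end

section
/- A stochastic model is factorizable if and only if it is both local and Jarrett-complete. That is, there exist p(A|a,λ), q(B|b,λ) ∈ [0,1] with Σ_A p = Σ_B q = 1 and P(A,B|a,b,λ) = p(A|a,λ)·q(B|b,λ) for all A,B,a,b,λ, if and only if the marginal P(A|a,b,λ) = Σ_B P(A,B|a,b,λ) does not depend on b, the marginal P(B|a,b,λ) = Σ_A P(A,B|a,b,λ) does not depend on a, and P(A,B|a,b,λ) = P(A|a,b,λ)·P(B|a,b,λ) for all A,B,a,b,λ. -/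
/-!
Factorizability gives both marginals directly: summing `p A · q B` over `B` leaves `p A`, which
does not mention `b`, and symmetrically for `q`; outcome independence is then the factorization
itself. Conversely, under locality the marginal `P(A|a,b,λ)` may be evaluated at any fixed
setting `b₀`, and `P(B|a,b,λ)` at any fixed `a₀`; these serve as `p` and `q`, and outcome
independence turns into the factorization. If one of the setting sets is empty the
factorization condition is vacuous and any local distributions will do.
-/

namespace Jarrett

variable {Λ SA SB : Type*} (P : ℝ → ℝ → SA → SB → Λ → ℝ)

def IsNonneg : Prop :=
  ∀ A B, (A = 1 ∨ A = -1) → (B = 1 ∨ B = -1) → ∀ a b l, 0 ≤ P A B a b l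

def IsNormalized : Prop :=
  ∀ a b l, P 1 1 a b l + P 1 (-1) a b l + P (-1) 1 a b l + P (-1) (-1) a b l = 1

def marginalA (A : ℝ) (a : SA) (b : SB) (l : Λ) : ℝ := P A 1 a b l + P A (-1) a b l

def marginalB (B : ℝ) (a : SA) (b : SB) (l : Λ) : ℝ := P 1 B a b l + P (-1) B a b l

def IsFactorizable : Prop :=
  ∃ (p : ℝ → SA → Λ → ℝ) (q : ℝ → SB → Λ → ℝ),
    (∀ A, (A = 1 ∨ A = -1) → ∀ a l, 0 ≤ p A a l ∧ p A a l ≤ 1) ∧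
    (∀ B, (B = 1 ∨ B = -1) → ∀ b l, 0 ≤ q B b l ∧ q B b l ≤ 1) ∧
    (∀ a l, p 1 a l + p (-1) a l = 1) ∧
    (∀ b l, q 1 b l + q (-1) b l = 1) ∧
    (∀ A B, (A = 1 ∨ A = -1) → (B = 1 ∨ B = -1) → ∀ a b l,
      P A B a b l = p A a l * q B b l)

def IsLocal : Prop :=
  (∀ A, (A = 1 ∨ A = -1) → ∀ a b b' l, marginalA P A a b l = marginalA P A a b' l) ∧
  (∀ B, (B = 1 ∨ B = -1) → ∀ a a' b l, marginalB P B a b l = marginalB P B a' b l)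

def IsJarrettComplete : Prop :=
  ∀ A B, (A = 1 ∨ A = -1) → (B = 1 ∨ B = -1) → ∀ a b l,
    P A B a b l = marginalA P A a b l * marginalB P B a b l

variable {P}

theorem marginalA_nonneg (hnonneg : IsNonneg P) {A : ℝ} (hA : A = 1 ∨ A = -1)
    (a : SA) (b : SB) (l : Λ) : 0 ≤ marginalA P A a b l :=
  add_nonneg (hnonneg A 1 hA (.inl rfl) a b l) (hnonneg A (-1) hA (.inr rfl) a b l)

theorem marginalB_nonneg (hnonneg : IsNonneg P) {B : ℝ} (hB : B = 1 ∨ B = -1)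
    (a : SA) (b : SB) (l : Λ) : 0 ≤ marginalB P B a b l :=
  add_nonneg (hnonneg 1 B (.inl rfl) hB a b l) (hnonneg (-1) B (.inr rfl) hB a b l)

theorem marginalA_one_add_marginalA_neg_one (hnorm : IsNormalized P) (a : SA) (b : SB) (l : Λ) :
    marginalA P 1 a b l + marginalA P (-1) a b l = 1 := by
  unfold marginalA
  linarith [hnorm a b l]

theorem marginalB_one_add_marginalB_neg_one (hnorm : IsNormalized P) (a : SA) (b : SB) (l : Λ) :
    marginalB P 1 a b l + marginalB P (-1) a b l = 1 := by
  unfold marginalB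
  linarith [hnorm a b l]

theorem marginalA_le_one (hnonneg : IsNonneg P) (hnorm : IsNormalized P) {A : ℝ}
    (hA : A = 1 ∨ A = -1) (a : SA) (b : SB) (l : Λ) : marginalA P A a b l ≤ 1 := by
  have hsum := marginalA_one_add_marginalA_neg_one hnorm a b l
  rcases hA with rfl | rfl
  · linarith [marginalA_nonneg hnonneg (A := -1) (.inr rfl) a b l]
  · linarith [marginalA_nonneg hnonneg (A := 1) (.inl rfl) a b l]

theorem marginalB_le_one (hnonneg : IsNonneg P) (hnorm : IsNormalized P) {B : ℝ}
    (hB : B = 1 ∨ B = -1) (a : SA) (b : SB) (l : Λ) : marginalB P B a b l ≤ 1 := by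
  have hsum := marginalB_one_add_marginalB_neg_one hnorm a b l
  rcases hB with rfl | rfl
  · linarith [marginalB_nonneg hnonneg (B := -1) (.inr rfl) a b l]
  · linarith [marginalB_nonneg hnonneg (B := 1) (.inl rfl) a b l]

section Factorization

variable {p : ℝ → SA → Λ → ℝ} {q : ℝ → SB → Λ → ℝ}

theorem marginalA_eq_of_factorization (hq : ∀ b l, q 1 b l + q (-1) b l = 1)
    (hfac : ∀ A B, (A = 1 ∨ A = -1) → (B = 1 ∨ B = -1) → ∀ a b l,
      P A B a b l = p A a l * q B b l)
    {A : ℝ} (hA : A = 1 ∨ A = -1) (a : SA) (b : SB) (l : Λ) :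
    marginalA P A a b l = p A a l := by
  rw [marginalA, hfac A 1 hA (.inl rfl), hfac A (-1) hA (.inr rfl), ← mul_add, hq, mul_one]

theorem marginalB_eq_of_factorization (hp : ∀ a l, p 1 a l + p (-1) a l = 1)
    (hfac : ∀ A B, (A = 1 ∨ A = -1) → (B = 1 ∨ B = -1) → ∀ a b l,
      P A B a b l = p A a l * q B b l)
    {B : ℝ} (hB : B = 1 ∨ B = -1) (a : SA) (b : SB) (l : Λ) :
    marginalB P B a b l = q B b l := by
  rw [marginalB, hfac 1 B (.inl rfl) hB, hfac (-1) B (.inr rfl) hB, ← add_mul, hp, one_mul]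

end Factorization

theorem IsFactorizable.isLocal (h : IsFactorizable P) : IsLocal P := by
  obtain ⟨p, q, -, -, hp, hq, hfac⟩ := h
  refine ⟨fun A hA a b b' l => ?_, fun B hB a a' b l => ?_⟩
  · rw [marginalA_eq_of_factorization hq hfac hA, marginalA_eq_of_factorization hq hfac hA]
  · rw [marginalB_eq_of_factorization hp hfac hB, marginalB_eq_of_factorization hp hfac hB]

theorem IsFactorizable.isJarrettComplete (h : IsFactorizable P) : IsJarrettComplete P := by
  obtain ⟨p, q, -, -, hp, hq, hfac⟩ := h
  intro A B hA hB a b l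
  rw [marginalA_eq_of_factorization hq hfac hA, marginalB_eq_of_factorization hp hfac hB,
    hfac A B hA hB]

theorem isFactorizable_of_isEmpty (h : IsEmpty SA ∨ IsEmpty SB) : IsFactorizable P := by
  refine ⟨fun _ _ _ => 1 / 2, fun _ _ _ => 1 / 2, by norm_num, by norm_num, by norm_num,
    by norm_num, fun _ _ _ _ a b _ => ?_⟩
  exact h.elim (fun _ => isEmptyElim a) (fun _ => isEmptyElim b)

theorem isFactorizable_of_isLocal_of_isJarrettComplete
    (hnonneg : IsNonneg P) (hnorm : IsNormalized P)
    (hL : IsLocal P) (hJC : IsJarrettComplete P) : IsFactorizable P := by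
  by_cases hempty : IsEmpty SA ∨ IsEmpty SB
  · exact isFactorizable_of_isEmpty hempty
  obtain ⟨⟨a₀⟩, ⟨b₀⟩⟩ : Nonempty SA ∧ Nonempty SB := by
    simpa only [not_or, not_isEmpty_iff] using hempty
  refine ⟨fun A a l => marginalA P A a b₀ l, fun B b l => marginalB P B a₀ b l,
    fun A hA a l =>
      ⟨marginalA_nonneg hnonneg hA a b₀ l, marginalA_le_one hnonneg hnorm hA a b₀ l⟩,
    fun B hB b l =>
      ⟨marginalB_nonneg hnonneg hB a₀ b l, marginalB_le_one hnonneg hnorm hB a₀ b l⟩,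
    fun a l => marginalA_one_add_marginalA_neg_one hnorm a b₀ l,
    fun b l => marginalB_one_add_marginalB_neg_one hnorm a₀ b l,
    fun A B hA hB a b l => ?_⟩
  rw [hJC A B hA hB a b l, hL.1 A hA a b b₀ l, hL.2 B hB a a₀ b l]

end Jarrett

open Jarrett in
/-- **Jarrett's 1984 theorem.** For a stochastic model with joint outcome distribution
`P(A,B|a,b,λ)` on outcomes `A, B ∈ {−1,1}` (nonnegative, summing to `1`), the model is
factorizable (Bell's local causality: `P(A,B|a,b,λ) = p(A|a,λ)·q(B|b,λ)` for some local
distributions `p`, `q`) if and only if it is both local (parameter independence: the marginal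
`P(A|a,b,λ) = Σ_B P(A,B|a,b,λ)` does not depend on `b` and `P(B|a,b,λ) = Σ_A P(A,B|a,b,λ)`
does not depend on `a`) and Jarrett-complete (outcome independence:
`P(A,B|a,b,λ) = P(A|a,b,λ)·P(B|a,b,λ)`). -/
theorem jarrett_theorem {Λ SA SB : Type*} (P : ℝ → ℝ → SA → SB → Λ → ℝ)
    (hP_nonneg : ∀ A B, (A = 1 ∨ A = -1) → (B = 1 ∨ B = -1) → ∀ a b l, 0 ≤ P A B a b l)
    (hP_sum : ∀ a b l,
      P 1 1 a b l + P 1 (-1) a b l + P (-1) 1 a b l + P (-1) (-1) a b l = 1) :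
    (∃ (p : ℝ → SA → Λ → ℝ) (q : ℝ → SB → Λ → ℝ),
        (∀ A, (A = 1 ∨ A = -1) → ∀ a l, 0 ≤ p A a l ∧ p A a l ≤ 1) ∧
        (∀ B, (B = 1 ∨ B = -1) → ∀ b l, 0 ≤ q B b l ∧ q B b l ≤ 1) ∧
        (∀ a l, p 1 a l + p (-1) a l = 1) ∧
        (∀ b l, q 1 b l + q (-1) b l = 1) ∧
        (∀ A B, (A = 1 ∨ A = -1) → (B = 1 ∨ B = -1) → ∀ a b l,
          P A B a b l = p A a l * q B b l))
    ↔ ((∀ A, (A = 1 ∨ A = -1) → ∀ a b b' l,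
          P A 1 a b l + P A (-1) a b l = P A 1 a b' l + P A (-1) a b' l) ∧
       (∀ B, (B = 1 ∨ B = -1) → ∀ a a' b l,
          P 1 B a b l + P (-1) B a b l = P 1 B a' b l + P (-1) B a' b l) ∧
       (∀ A B, (A = 1 ∨ A = -1) → (B = 1 ∨ B = -1) → ∀ a b l,
          P A B a b l
            = (P A 1 a b l + P A (-1) a b l) * (P 1 B a b l + P (-1) B a b l))) := by
  refine ⟨fun h => ?_, fun ⟨hA, hB, hJC⟩ =>
    isFactorizable_of_isLocal_of_isJarrettComplete hP_nonneg hP_sum ⟨hA, hB⟩ hJC⟩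
  have hF : IsFactorizable P := h
  exact ⟨hF.isLocal.1, hF.isLocal.2, hF.isJarrettComplete⟩
end

section
/- Let a stochastic model be factorizable with factors p(A|a,λ) and q(B|b,λ), and fix settings a ∈ S_A, b ∈ S_B. Suppose the predicted phenomenon is perfectly anticorrelated at (a,b), i.e., f(A,B|a,b) = 0 whenever A = B. Then for μ-almost every λ ∈ Λ: p(A|a,λ) ∈ {0,1} for both A ∈ {−1,1}, q(B|b,λ) ∈ {0,1} for both B ∈ {−1,1}, and p(A|a,λ) = q(−A|b,λ). In words: under local causality, perfect predictability of one outcome from the other entails determinism of the hidden-variable model at those settings. -/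
/-! A nonnegative integrable function with zero integral vanishes almost everywhere, so
`p(A|a,λ) q(A|b,λ) = 0` for both outcomes `A` and almost every `λ`. Since
`p(-1) = 1 - p(1)` and `q(-1) = 1 - q(1)`, the two equations `p(1) q(1) = 0` and
`(1 - p(1)) (1 - q(1)) = 0` force `p(1) + q(1) = 1`, hence `p(1) (1 - p(1)) = 0`. -/

open MeasureTheory

theorem ae_mul_eq_zero_of_integral_mul_eq_zero {Λ : Type*} [MeasurableSpace Λ] {μ : Measure Λ}
    [IsFiniteMeasure μ] {f g : Λ → ℝ}
    (hf : Measurable f) (hg : Measurable g) (hf0 : 0 ≤ f) (hf1 : f ≤ 1) (hg0 : 0 ≤ g) (hg1 : g ≤ 1)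
    (h : ∫ l, f l * g l ∂μ = 0) : ∀ᵐ l ∂μ, f l * g l = 0 := by
  have hfg0 : 0 ≤ f * g := mul_nonneg hf0 hg0
  have hint : Integrable (f * g) μ := by
    refine Integrable.of_bound (hf.mul hg).aestronglyMeasurable 1 (.of_forall fun l => ?_)
    rw [Real.norm_eq_abs, abs_of_nonneg (hfg0 l)]
    exact mul_le_one₀ (hf1 l) (hg0 l) (hg1 l)
  exact (integral_eq_zero_iff_of_nonneg hfg0 hint).mp h

theorem eq_and_eq_of_mul_eq_zero_of_add_eq_one {x x' y y' : ℝ} (hx : x + x' = 1) (hy : y + y' = 1)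
    (h : x * y = 0) (h' : x' * y' = 0) : x = y' ∧ x' = y := by
  constructor
  · linear_combination h - h' + y' * hx - x * hy
  · linear_combination h' - h + (1 - y') * hx + (x - 1) * hy

theorem determinism_of_perfect_anticorrelation {P Q : ℝ → ℝ}
    (hP : P 1 + P (-1) = 1) (hQ : Q 1 + Q (-1) = 1)
    (h₁ : P 1 * Q 1 = 0) (h₂ : P (-1) * Q (-1) = 0) :
    (∀ A, (A = 1 ∨ A = -1) → (P A = 0 ∨ P A = 1)) ∧
    (∀ B, (B = 1 ∨ B = -1) → (Q B = 0 ∨ Q B = 1)) ∧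
    (∀ A, (A = 1 ∨ A = -1) → P A = Q (-A)) := by
  obtain ⟨hP₁, hP₂⟩ := eq_and_eq_of_mul_eq_zero_of_add_eq_one hP hQ h₁ h₂
  have hdet : P 1 = 0 ∨ P 1 = 1 := by
    rcases mul_eq_zero.mp h₁ with h | h
    · exact .inl h
    · exact .inr (by linarith)
  refine ⟨?_, ?_, ?_⟩
  · rintro A (rfl | rfl) <;> rcases hdet with h | h <;> [left; right; right; left] <;> linarith
  · rintro B (rfl | rfl) <;> rcases hdet with h | h <;> [right; left; left; right] <;> linarith
  · rintro A (rfl | rfl)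
    · exact hP₁
    · rw [neg_neg]; exact hP₂

/-- **Under local causality, perfect predictability entails determinism.**
Let a stochastic model be factorizable with factors `p(A|a,λ)` and `q(B|b,λ)` (so its
predicted phenomenon is `f(A,B|a,b) = ∫ p(A|a,λ)·q(B|b,λ) dμ(λ)`), and fix settings `a`, `b`.
If the phenomenon is perfectly anticorrelated at `(a,b)` — `f(A,B|a,b) = 0` whenever `A = B` —
then for `μ`-almost every `λ`: `p(A|a,λ) ∈ {0,1}` for both outcomes `A`,
`q(B|b,λ) ∈ {0,1}` for both outcomes `B`, and `p(A|a,λ) = q(−A|b,λ)`. -/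
theorem perfect_anticorrelation_implies_determinism
    {Λ : Type*} [MeasurableSpace Λ] (μ : Measure Λ) [IsProbabilityMeasure μ]
    {SA SB : Type*} (p : ℝ → SA → Λ → ℝ) (q : ℝ → SB → Λ → ℝ)
    (hp0 : ∀ A, (A = 1 ∨ A = -1) → ∀ a l, 0 ≤ p A a l)
    (hp1 : ∀ A, (A = 1 ∨ A = -1) → ∀ a l, p A a l ≤ 1)
    (hq0 : ∀ B, (B = 1 ∨ B = -1) → ∀ b l, 0 ≤ q B b l)
    (hq1 : ∀ B, (B = 1 ∨ B = -1) → ∀ b l, q B b l ≤ 1)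
    (hp_sum : ∀ a l, p 1 a l + p (-1) a l = 1)
    (hq_sum : ∀ b l, q 1 b l + q (-1) b l = 1)
    (hp_meas : ∀ A a, Measurable fun l => p A a l)
    (hq_meas : ∀ B b, Measurable fun l => q B b l)
    (a : SA) (b : SB)
    (hanti : ∀ A B, (A = 1 ∨ A = -1) → (B = 1 ∨ B = -1) → A = B →
      (∫ l, p A a l * q B b l ∂μ) = 0) :
    ∀ᵐ l ∂μ,
      (∀ A, (A = 1 ∨ A = -1) → (p A a l = 0 ∨ p A a l = 1)) ∧
      (∀ B, (B = 1 ∨ B = -1) → (q B b l = 0 ∨ q B b l = 1)) ∧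
      (∀ A, (A = 1 ∨ A = -1) → p A a l = q (-A) b l) := by
  have hsame : ∀ A, (A = 1 ∨ A = -1) → ∀ᵐ l ∂μ, p A a l * q A b l = 0 := fun A hA =>
    ae_mul_eq_zero_of_integral_mul_eq_zero (hp_meas A a) (hq_meas A b) (hp0 A hA a)
      (hp1 A hA a) (hq0 A hA b) (hq1 A hA b) (hanti A A hA hA rfl)
  filter_upwards [hsame 1 (.inl rfl), hsame (-1) (.inr rfl)] with l h₁ h₂
  exact determinism_of_perfect_anticorrelation (hp_sum a l) (hq_sum b l) h₁ h₂
end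

section
/- A stochastic model satisfies Bell's local-causality conditions if and only if it is factorizable. Precisely: there exist functions p(A|a,λ), q(B|b,λ) ∈ [0,1] with Σ_A p(A|a,λ) = Σ_B q(B|b,λ) = 1 such that for all A, B, a, b, λ: (i) P(A|a,b,λ) > 0 implies P(A,B|a,b,λ) = P(A|a,b,λ)·q(B|b,λ), and (ii) P(B|a,b,λ) > 0 implies P(A,B|a,b,λ) = p(A|a,λ)·P(B|a,b,λ) — if and only if there exist such p, q with P(A,B|a,b,λ) = p(A|a,λ)·q(B|b,λ) for all A, B, a, b, λ. -/
/-!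
Fix the settings and the hidden variable. A screening-off identity that is only required when the
conditioning marginal is positive holds unconditionally, because a null marginal of a nonnegative
distribution forces the joint probabilities it sums to vanish. Summing Alice's identity
`P(A,B) = p(A) P(B)` over `B` gives `P(A) = p(A)`, and Bob's identity `P(A,B) = P(A) q(B)` becomes
`P(A,B) = p(A) q(B)`. Conversely, the marginals of a product distribution are its factors.
-/

theorem eq_add_mul_of_pos_imp {x y z c : ℝ} (hx : 0 ≤ x) (hy : 0 ≤ y) (hz : z = x ∨ z = y)
    (h : 0 < x + y → z = (x + y) * c) : z = (x + y) * c := by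
  rcases (add_nonneg hx hy).lt_or_eq with hpos | hnull
  · exact h hpos
  · obtain ⟨rfl, rfl⟩ := (add_eq_zero_iff_of_nonneg hx hy).1 hnull.symm
    rcases hz with rfl | rfl <;> simp

section FixedSettings

variable {P : ℝ → ℝ → ℝ} {p q : ℝ → ℝ}

theorem factorizes_of_screening_off
    (hP_nonneg : ∀ A B, (A = 1 ∨ A = -1) → (B = 1 ∨ B = -1) → 0 ≤ P A B)
    (hP_sum : P 1 1 + P 1 (-1) + P (-1) 1 + P (-1) (-1) = 1)
    (hLC : ∀ A B, (A = 1 ∨ A = -1) → (B = 1 ∨ B = -1) →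
      (0 < P A 1 + P A (-1) → P A B = (P A 1 + P A (-1)) * q B) ∧
      (0 < P 1 B + P (-1) B → P A B = p A * (P 1 B + P (-1) B)))
    {A B : ℝ} (hA : A = 1 ∨ A = -1) (hB : B = 1 ∨ B = -1) :
    P A B = p A * q B := by
  have hAlice : ∀ B', (B' = 1 ∨ B' = -1) → P A B' = (P 1 B' + P (-1) B') * p A :=
    fun B' hB' => eq_add_mul_of_pos_imp (hP_nonneg 1 B' (.inl rfl) hB')
      (hP_nonneg (-1) B' (.inr rfl) hB') (by rcases hA with rfl | rfl <;> simp)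
      fun hpos => ((hLC A B' hA hB').2 hpos).trans (mul_comm _ _)
  have hBob : P A B = (P A 1 + P A (-1)) * q B :=
    eq_add_mul_of_pos_imp (hP_nonneg A 1 hA (.inl rfl)) (hP_nonneg A (-1) hA (.inr rfl))
      (by rcases hB with rfl | rfl <;> simp) (hLC A B hA hB).1
  have hmarginal : P A 1 + P A (-1) = p A := by
    linear_combination hAlice 1 (.inl rfl) + hAlice (-1) (.inr rfl) + p A * hP_sum
  rw [hBob, hmarginal]

theorem screening_off_of_factorizes (hp : p 1 + p (-1) = 1) (hq : q 1 + q (-1) = 1)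
    (hfac : ∀ A B, (A = 1 ∨ A = -1) → (B = 1 ∨ B = -1) → P A B = p A * q B)
    {A B : ℝ} (hA : A = 1 ∨ A = -1) (hB : B = 1 ∨ B = -1) :
    P A B = (P A 1 + P A (-1)) * q B ∧ P A B = p A * (P 1 B + P (-1) B) := by
  have hmarginalA : P A 1 + P A (-1) = p A := by
    linear_combination hfac A 1 hA (.inl rfl) + hfac A (-1) hA (.inr rfl) + p A * hq
  have hmarginalB : P 1 B + P (-1) B = q B := by
    linear_combination hfac 1 B (.inl rfl) hB + hfac (-1) B (.inr rfl) hB + q B * hp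
  rw [hmarginalA, hmarginalB, hfac A B hA hB]
  exact ⟨rfl, rfl⟩

end FixedSettings

/-- **Bell's local-causality conditions are equivalent to factorizability.**
For a stochastic model `P(A,B|a,b,λ)` on outcomes `A, B ∈ {−1,1}` (nonnegative, summing
to `1`), with marginals `P(A|a,b,λ) = Σ_B P(A,B|a,b,λ)` and `P(B|a,b,λ) = Σ_A P(A,B|a,b,λ)`:
there exist `p(A|a,λ), q(B|b,λ) ∈ [0,1]` with `Σ_A p = Σ_B q = 1` such that
(i) `P(A|a,b,λ) > 0` implies `P(A,B|a,b,λ) = P(A|a,b,λ)·q(B|b,λ)` and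
(ii) `P(B|a,b,λ) > 0` implies `P(A,B|a,b,λ) = p(A|a,λ)·P(B|a,b,λ)`,
if and only if there exist such `p`, `q` with `P(A,B|a,b,λ) = p(A|a,λ)·q(B|b,λ)`. -/
theorem local_causality_iff_factorizable {Λ SA SB : Type*}
    (P : ℝ → ℝ → SA → SB → Λ → ℝ)
    (hP_nonneg : ∀ A B, (A = 1 ∨ A = -1) → (B = 1 ∨ B = -1) → ∀ a b l, 0 ≤ P A B a b l)
    (hP_sum : ∀ a b l,
      P 1 1 a b l + P 1 (-1) a b l + P (-1) 1 a b l + P (-1) (-1) a b l = 1) :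
    (∃ (p : ℝ → SA → Λ → ℝ) (q : ℝ → SB → Λ → ℝ),
        (∀ A, (A = 1 ∨ A = -1) → ∀ a l, 0 ≤ p A a l ∧ p A a l ≤ 1) ∧
        (∀ B, (B = 1 ∨ B = -1) → ∀ b l, 0 ≤ q B b l ∧ q B b l ≤ 1) ∧
        (∀ a l, p 1 a l + p (-1) a l = 1) ∧
        (∀ b l, q 1 b l + q (-1) b l = 1) ∧
        (∀ A B, (A = 1 ∨ A = -1) → (B = 1 ∨ B = -1) → ∀ a b l,
          (0 < P A 1 a b l + P A (-1) a b l →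
            P A B a b l = (P A 1 a b l + P A (-1) a b l) * q B b l) ∧
          (0 < P 1 B a b l + P (-1) B a b l →
            P A B a b l = p A a l * (P 1 B a b l + P (-1) B a b l))))
    ↔ (∃ (p : ℝ → SA → Λ → ℝ) (q : ℝ → SB → Λ → ℝ),
        (∀ A, (A = 1 ∨ A = -1) → ∀ a l, 0 ≤ p A a l ∧ p A a l ≤ 1) ∧
        (∀ B, (B = 1 ∨ B = -1) → ∀ b l, 0 ≤ q B b l ∧ q B b l ≤ 1) ∧
        (∀ a l, p 1 a l + p (-1) a l = 1) ∧
        (∀ b l, q 1 b l + q (-1) b l = 1) ∧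
        (∀ A B, (A = 1 ∨ A = -1) → (B = 1 ∨ B = -1) → ∀ a b l,
          P A B a b l = p A a l * q B b l)) := by
  constructor
  · rintro ⟨p, q, hp, hq, hp_sum, hq_sum, hLC⟩
    refine ⟨p, q, hp, hq, hp_sum, hq_sum, fun A B hA hB a b l => ?_⟩
    exact factorizes_of_screening_off (fun A B hA hB => hP_nonneg A B hA hB a b l) (hP_sum a b l)
      (fun A B hA hB => hLC A B hA hB a b l) hA hB
  · rintro ⟨p, q, hp, hq, hp_sum, hq_sum, hfac⟩
    refine ⟨p, q, hp, hq, hp_sum, hq_sum, fun A B hA hB a b l => ?_⟩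
    obtain ⟨hBob, hAlice⟩ := screening_off_of_factorizes (hp_sum a l) (hq_sum b l)
      (fun A B hA hB => hfac A B hA hB a b l) hA hB
    exact ⟨fun _ => hBob, fun _ => hAlice⟩
end

section
/- Let a stochastic model be Jarrett-complete and fragilely local with witnessing function r(B|b,λ) for Bob's side. Fix a ∈ S_A, b ∈ S_B and outcomes A, B ∈ {−1,1}, and suppose f(A,B|a,b) = Σ_{B′} f(A,B′|a,b) (i.e., the phenomenon's conditional frequency of B given A at settings (a,b) equals 1). Then for μ-almost every λ with P(A|a,b,λ) > 0: P(B|a,b,λ) = 1 and r(B|b,λ) = 1. -/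
/-!
Predictability says that the integral of `P(A,B|a,b,λ)` equals that of the marginal
`P(A|a,b,λ)`, which dominates it pointwise; hence the two agree for almost every `λ`.
By Jarrett-completeness `P(A,B|a,b,λ) = P(A|a,b,λ) P(B|a,b,λ)`, so wherever `P(A|a,b,λ) > 0`
this forces `P(B|a,b,λ) = 1`, and fragile locality then transfers the value `1` to
`r(B|b,λ)`.
-/

open MeasureTheory

lemma apply_le_one_of_sum_pm_one_eq_one {p : ℝ → ℝ → ℝ}
    (hp_nonneg : ∀ A B, (A = 1 ∨ A = -1) → (B = 1 ∨ B = -1) → 0 ≤ p A B)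
    (hp_sum : p 1 1 + p 1 (-1) + p (-1) 1 + p (-1) (-1) = 1)
    {A B : ℝ} (hA : A = 1 ∨ A = -1) (hB : B = 1 ∨ B = -1) : p A B ≤ 1 := by
  have h₁ := hp_nonneg 1 1 (.inl rfl) (.inl rfl)
  have h₂ := hp_nonneg 1 (-1) (.inl rfl) (.inr rfl)
  have h₃ := hp_nonneg (-1) 1 (.inr rfl) (.inl rfl)
  have h₄ := hp_nonneg (-1) (-1) (.inr rfl) (.inr rfl)
  rcases hA with rfl | rfl <;> rcases hB with rfl | rfl <;> linarith

lemma apply_le_sum_pm_one {p : ℝ → ℝ} (hp_nonneg : ∀ B, (B = 1 ∨ B = -1) → 0 ≤ p B)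
    {B : ℝ} (hB : B = 1 ∨ B = -1) : p B ≤ p 1 + p (-1) := by
  have h₁ := hp_nonneg 1 (.inl rfl)
  have h₂ := hp_nonneg (-1) (.inr rfl)
  rcases hB with rfl | rfl <;> linarith

theorem jc_fl_predictability_implies_determinacy_general
    {Λ : Type*} [MeasurableSpace Λ] (μ : Measure Λ) [IsProbabilityMeasure μ]
    {SA SB : Type*} (P : ℝ → ℝ → SA → SB → Λ → ℝ)
    (hP_nonneg : ∀ A B, (A = 1 ∨ A = -1) → (B = 1 ∨ B = -1) → ∀ a b l, 0 ≤ P A B a b l)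
    (hP_sum : ∀ a b l,
      P 1 1 a b l + P 1 (-1) a b l + P (-1) 1 a b l + P (-1) (-1) a b l = 1)
    (hP_meas : ∀ A B, (A = 1 ∨ A = -1) → (B = 1 ∨ B = -1) → ∀ a b,
      Measurable fun l => P A B a b l)
    (hJC : ∀ A B, (A = 1 ∨ A = -1) → (B = 1 ∨ B = -1) → ∀ a b l,
      P A B a b l
        = (P A 1 a b l + P A (-1) a b l) * (P 1 B a b l + P (-1) B a b l))
    (r : ℝ → SB → Λ → ℝ)
    (hr : ∀ B, (B = 1 ∨ B = -1) → ∀ a b l,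
      (P 1 B a b l + P (-1) B a b l = 0 ∨ P 1 B a b l + P (-1) B a b l = 1) →
        P 1 B a b l + P (-1) B a b l = r B b l)
    (a : SA) (b : SB) (A B : ℝ) (hA : A = 1 ∨ A = -1) (hB : B = 1 ∨ B = -1)
    (hpred : (∫ l, P A B a b l ∂μ)
      = (∫ l, P A 1 a b l ∂μ) + (∫ l, P A (-1) a b l ∂μ)) :
    ∀ᵐ l ∂μ, 0 < P A 1 a b l + P A (-1) a b l →
      (P 1 B a b l + P (-1) B a b l = 1 ∧ r B b l = 1) := by
  have hint : ∀ B', (B' = 1 ∨ B' = -1) → Integrable (fun l => P A B' a b l) μ :=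
    fun B' hB' => .of_bound (hP_meas A B' hA hB' a b).aestronglyMeasurable 1 <|
      ae_of_all _ fun l => by
        rw [Real.norm_of_nonneg (hP_nonneg A B' hA hB' a b l)]
        exact apply_le_one_of_sum_pm_one_eq_one (fun A B hA hB => hP_nonneg A B hA hB a b l)
          (hP_sum a b l) hA hB'
  have hmarg : (fun l => P A B a b l) =ᵐ[μ] fun l => P A 1 a b l + P A (-1) a b l := by
    refine (integral_eq_iff_of_ae_le (hint B hB) ((hint 1 (.inl rfl)).add (hint (-1) (.inr rfl)))
      (ae_of_all _ fun l => apply_le_sum_pm_one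
        (fun B hB => hP_nonneg A B hA hB a b l) hB)).mp ?_
    rw [hpred, ← integral_add (hint 1 (.inl rfl)) (hint (-1) (.inr rfl))]
    rfl
  filter_upwards [hmarg] with l hl hpos
  have hPB : P 1 B a b l + P (-1) B a b l = 1 :=
    (mul_eq_left₀ hpos.ne').mp (hl ▸ hJC A B hA hB a b l).symm
  exact ⟨hPB, (hr B hB a b l (.inr hPB)).symm.trans hPB⟩

/-- **Jarrett-completeness plus fragile locality yields determinacy from predictability.**
Let a stochastic model `P(A,B|a,b,λ)` (nonnegative, summing to `1`, measurable in `λ`) be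
Jarrett-complete (`P(A,B|a,b,λ) = P(A|a,b,λ)·P(B|a,b,λ)`, with marginals
`P(A|a,b,λ) = Σ_B P(A,B|a,b,λ)` and `P(B|a,b,λ) = Σ_A P(A,B|a,b,λ)`) and fragilely local with
witnessing function `r(B|b,λ)` for Bob's side (and `s(A|a,λ)` for Alice's):
`P(B|a,b,λ) ∈ {0,1}` implies `P(B|a,b,λ) = r(B|b,λ)`, and similarly for `s`. Fix settings
`a, b` and outcomes `A, B ∈ {−1,1}`, and suppose the predicted phenomenon
`f(A,B|a,b) = ∫ P(A,B|a,b,λ) dμ(λ)` satisfies `f(A,B|a,b) = Σ_{B′} f(A,B′|a,b)` (the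
conditional frequency of `B` given `A` equals `1`). Then for `μ`-almost every `λ` with
`P(A|a,b,λ) > 0`: `P(B|a,b,λ) = 1` and `r(B|b,λ) = 1`. -/
theorem jc_fl_predictability_implies_determinacy
    {Λ : Type*} [MeasurableSpace Λ] (μ : Measure Λ) [IsProbabilityMeasure μ]
    {SA SB : Type*} (P : ℝ → ℝ → SA → SB → Λ → ℝ)
    (hP_nonneg : ∀ A B, (A = 1 ∨ A = -1) → (B = 1 ∨ B = -1) → ∀ a b l, 0 ≤ P A B a b l)
    (hP_sum : ∀ a b l,
      P 1 1 a b l + P 1 (-1) a b l + P (-1) 1 a b l + P (-1) (-1) a b l = 1)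
    (hP_meas : ∀ A B, (A = 1 ∨ A = -1) → (B = 1 ∨ B = -1) → ∀ a b,
      Measurable fun l => P A B a b l)
    (hJC : ∀ A B, (A = 1 ∨ A = -1) → (B = 1 ∨ B = -1) → ∀ a b l,
      P A B a b l
        = (P A 1 a b l + P A (-1) a b l) * (P 1 B a b l + P (-1) B a b l))
    (r : ℝ → SB → Λ → ℝ) (s : ℝ → SA → Λ → ℝ)
    (hr : ∀ B, (B = 1 ∨ B = -1) → ∀ a b l,
      (P 1 B a b l + P (-1) B a b l = 0 ∨ P 1 B a b l + P (-1) B a b l = 1) →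
        P 1 B a b l + P (-1) B a b l = r B b l)
    (hs : ∀ A, (A = 1 ∨ A = -1) → ∀ a b l,
      (P A 1 a b l + P A (-1) a b l = 0 ∨ P A 1 a b l + P A (-1) a b l = 1) →
        P A 1 a b l + P A (-1) a b l = s A a l)
    (a : SA) (b : SB) (A B : ℝ) (hA : A = 1 ∨ A = -1) (hB : B = 1 ∨ B = -1)
    (hpred : (∫ l, P A B a b l ∂μ)
      = (∫ l, P A 1 a b l ∂μ) + (∫ l, P A (-1) a b l ∂μ)) :
    ∀ᵐ l ∂μ, 0 < P A 1 a b l + P A (-1) a b l →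
      (P 1 B a b l + P (-1) B a b l = 1 ∧ r B b l = 1) :=
  jc_fl_predictability_implies_determinacy_general μ P hP_nonneg hP_sum hP_meas hJC r hr a b A B hA
    hB hpred
end

section
/- There is no stochastic model that is both local and Jarrett-complete whose predicted phenomenon equals the singlet phenomenon f_sing(A,B|a,b) = (1 − A·B·⟨a,b⟩)/4 over unit-vector settings a, b ∈ ℝ³. That is, quantum phenomena violate either locality or Jarrett-completeness. -/
/-!
In a local, Jarrett-complete model the outcomes are independent given `λ`, with the
distribution of `A` depending only on `a` and that of `B` only on `b`. The correlation
`E(a,b) = Σ A B f(A,B|a,b)` is therefore an average over `λ` of products `m_A(a,λ) m_B(b,λ)` of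
numbers in `[-1,1]`, and such products obey the CHSH bound
`E(a,b) + E(a,b') + E(a',b) - E(a',b') ≤ 2`. The singlet phenomenon has `E(a,b) = -⟨a,b⟩`,
which for suitable coplanar unit vectors makes the left-hand side `14/5`.
-/

open MeasureTheory
open scoped RealInnerProductSpace

theorem chsh_le_two {x x' y y' : ℝ} (hx : |x| ≤ 1) (hx' : |x'| ≤ 1) (hy : |y| ≤ 1)
    (hy' : |y'| ≤ 1) : x * y + x * y' + x' * y - x' * y' ≤ 2 := by
  have h₁ : x * (y + y') ≤ |y + y'| :=
    (le_abs_self _).trans (by rw [abs_mul]; exact mul_le_of_le_one_left (abs_nonneg _) hx)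
  have h₂ : x' * (y - y') ≤ |y - y'| :=
    (le_abs_self _).trans (by rw [abs_mul]; exact mul_le_of_le_one_left (abs_nonneg _) hx')
  have h₃ : |y + y'| + |y - y'| ≤ 2 := by
    rw [abs_le] at hy hy'
    rcases abs_cases (y + y') with ⟨h, _⟩ | ⟨h, _⟩ <;>
      rcases abs_cases (y - y') with ⟨h', _⟩ | ⟨h', _⟩ <;> linarith
  linarith

namespace Bell

variable {α β Λ : Type*}

/-- Outcomes `±1` are encoded as the reals `1` and `-1`; `P A B a b λ` is `P(A,B|a,b,λ)`. -/
structure IsStochasticModel [MeasurableSpace Λ] (P : ℝ → ℝ → α → β → Λ → ℝ) : Prop where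
  nonneg : ∀ A B, (A = 1 ∨ A = -1) → (B = 1 ∨ B = -1) → ∀ a b l, 0 ≤ P A B a b l
  sum_eq_one : ∀ a b l,
    P 1 1 a b l + P 1 (-1) a b l + P (-1) 1 a b l + P (-1) (-1) a b l = 1
  measurable : ∀ A B, (A = 1 ∨ A = -1) → (B = 1 ∨ B = -1) → ∀ a b,
    Measurable fun l => P A B a b l

def marginalA (P : ℝ → ℝ → α → β → Λ → ℝ) (A : ℝ) (a : α) (b : β) (l : Λ) : ℝ :=
  P A 1 a b l + P A (-1) a b l

def marginalB (P : ℝ → ℝ → α → β → Λ → ℝ) (B : ℝ) (a : α) (b : β) (l : Λ) : ℝ :=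
  P 1 B a b l + P (-1) B a b l

def IsLocal (P : ℝ → ℝ → α → β → Λ → ℝ) : Prop :=
  (∀ A, (A = 1 ∨ A = -1) → ∀ a b b' l, marginalA P A a b l = marginalA P A a b' l) ∧
  (∀ B, (B = 1 ∨ B = -1) → ∀ a a' b l, marginalB P B a b l = marginalB P B a' b l)

def IsJarrettComplete (P : ℝ → ℝ → α → β → Λ → ℝ) : Prop :=
  ∀ A B, (A = 1 ∨ A = -1) → (B = 1 ∨ B = -1) → ∀ a b l,
    P A B a b l = marginalA P A a b l * marginalB P B a b l

def meanA (P : ℝ → ℝ → α → β → Λ → ℝ) (a : α) (b : β) (l : Λ) : ℝ :=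
  marginalA P 1 a b l - marginalA P (-1) a b l

def meanB (P : ℝ → ℝ → α → β → Λ → ℝ) (a : α) (b : β) (l : Λ) : ℝ :=
  marginalB P 1 a b l - marginalB P (-1) a b l

def correlation (P : ℝ → ℝ → α → β → Λ → ℝ) (a : α) (b : β) (l : Λ) : ℝ :=
  P 1 1 a b l - P 1 (-1) a b l - P (-1) 1 a b l + P (-1) (-1) a b l

variable {P : ℝ → ℝ → α → β → Λ → ℝ}

theorem IsJarrettComplete.correlation_eq (hJC : IsJarrettComplete P) (a : α) (b : β) (l : Λ) :
    correlation P a b l = meanA P a b l * meanB P a b l := by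
  have h₁ := hJC 1 1 (.inl rfl) (.inl rfl) a b l
  have h₂ := hJC 1 (-1) (.inl rfl) (.inr rfl) a b l
  have h₃ := hJC (-1) 1 (.inr rfl) (.inl rfl) a b l
  have h₄ := hJC (-1) (-1) (.inr rfl) (.inr rfl) a b l
  rw [correlation, meanA, meanB, h₁, h₂, h₃, h₄]
  ring

theorem IsLocal.meanA_eq (hL : IsLocal P) (a : α) (b b' : β) (l : Λ) :
    meanA P a b l = meanA P a b' l := by
  rw [meanA, meanA, hL.1 1 (.inl rfl) a b b' l, hL.1 (-1) (.inr rfl) a b b' l]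

theorem IsLocal.meanB_eq (hL : IsLocal P) (a a' : α) (b : β) (l : Λ) :
    meanB P a b l = meanB P a' b l := by
  rw [meanB, meanB, hL.2 1 (.inl rfl) a a' b l, hL.2 (-1) (.inr rfl) a a' b l]

theorem correlation_eq_meanA_mul_meanB (hL : IsLocal P) (hJC : IsJarrettComplete P)
    (a₀ a : α) (b₀ b : β) (l : Λ) :
    correlation P a b l = meanA P a b₀ l * meanB P a₀ b l := by
  rw [hJC.correlation_eq, hL.meanA_eq a b b₀, hL.meanB_eq a a₀]

section Measurable

variable [MeasurableSpace Λ]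

theorem IsStochasticModel.abs_meanA_le_one (hP : IsStochasticModel P) (a : α) (b : β) (l : Λ) :
    |meanA P a b l| ≤ 1 := by
  have := hP.sum_eq_one a b l
  have := hP.nonneg 1 1 (.inl rfl) (.inl rfl) a b l
  have := hP.nonneg 1 (-1) (.inl rfl) (.inr rfl) a b l
  have := hP.nonneg (-1) 1 (.inr rfl) (.inl rfl) a b l
  have := hP.nonneg (-1) (-1) (.inr rfl) (.inr rfl) a b l
  rw [abs_le, meanA, marginalA, marginalA]
  constructor <;> linarith

theorem IsStochasticModel.abs_meanB_le_one (hP : IsStochasticModel P) (a : α) (b : β) (l : Λ) :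
    |meanB P a b l| ≤ 1 := by
  have := hP.sum_eq_one a b l
  have := hP.nonneg 1 1 (.inl rfl) (.inl rfl) a b l
  have := hP.nonneg 1 (-1) (.inl rfl) (.inr rfl) a b l
  have := hP.nonneg (-1) 1 (.inr rfl) (.inl rfl) a b l
  have := hP.nonneg (-1) (-1) (.inr rfl) (.inr rfl) a b l
  rw [abs_le, meanB, marginalB, marginalB]
  constructor <;> linarith

theorem IsStochasticModel.le_one (hP : IsStochasticModel P) {A B : ℝ} (hA : A = 1 ∨ A = -1)
    (hB : B = 1 ∨ B = -1) (a : α) (b : β) (l : Λ) : P A B a b l ≤ 1 := by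
  have := hP.sum_eq_one a b l
  have := hP.nonneg 1 1 (.inl rfl) (.inl rfl) a b l
  have := hP.nonneg 1 (-1) (.inl rfl) (.inr rfl) a b l
  have := hP.nonneg (-1) 1 (.inr rfl) (.inl rfl) a b l
  have := hP.nonneg (-1) (-1) (.inr rfl) (.inr rfl) a b l
  rcases hA with rfl | rfl <;> rcases hB with rfl | rfl <;> linarith

variable {μ : Measure Λ} [IsFiniteMeasure μ]

theorem IsStochasticModel.integrable (hP : IsStochasticModel P) {A B : ℝ} (hA : A = 1 ∨ A = -1)
    (hB : B = 1 ∨ B = -1) (a : α) (b : β) : Integrable (fun l => P A B a b l) μ := by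
  refine (integrable_const (1 : ℝ)).mono' (hP.measurable A B hA hB a b).aestronglyMeasurable
    (ae_of_all _ fun l => ?_)
  rw [Real.norm_eq_abs, abs_of_nonneg (hP.nonneg A B hA hB a b l)]
  exact hP.le_one hA hB a b l

theorem IsStochasticModel.integrable_correlation (hP : IsStochasticModel P) (a : α) (b : β) :
    Integrable (correlation P a b) μ :=
  (((hP.integrable (.inl rfl) (.inl rfl) a b).sub (hP.integrable (.inl rfl) (.inr rfl) a b)).sub
    (hP.integrable (.inr rfl) (.inl rfl) a b)).add (hP.integrable (.inr rfl) (.inr rfl) a b)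

theorem IsStochasticModel.integral_correlation_eq_neg (hP : IsStochasticModel P) {a : α} {b : β}
    {c : ℝ} (hf : ∀ A B, (A = 1 ∨ A = -1) → (B = 1 ∨ B = -1) →
      ∫ l, P A B a b l ∂μ = (1 - A * B * c) / 4) :
    ∫ l, correlation P a b l ∂μ = -c := by
  have i₁ := hP.integrable (μ := μ) (.inl rfl) (.inl rfl) a b
  have i₂ := hP.integrable (μ := μ) (.inl rfl) (.inr rfl) a b
  have i₃ := hP.integrable (μ := μ) (.inr rfl) (.inl rfl) a b
  have i₄ := hP.integrable (μ := μ) (.inr rfl) (.inr rfl) a b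
  simp only [correlation]
  rw [integral_add ?_ i₄, integral_sub ?_ i₃, integral_sub i₁ i₂,
    hf 1 1 (.inl rfl) (.inl rfl), hf 1 (-1) (.inl rfl) (.inr rfl),
    hf (-1) 1 (.inr rfl) (.inl rfl), hf (-1) (-1) (.inr rfl) (.inr rfl)]
  · ring
  · exact i₁.sub i₂
  · exact (i₁.sub i₂).sub i₃

theorem chsh_integral_le_two [IsProbabilityMeasure μ] (hP : IsStochasticModel P) (hL : IsLocal P)
    (hJC : IsJarrettComplete P) (a a' : α) (b b' : β) :
    (∫ l, correlation P a b l ∂μ) + (∫ l, correlation P a b' l ∂μ)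
      + (∫ l, correlation P a' b l ∂μ) - (∫ l, correlation P a' b' l ∂μ) ≤ 2 := by
  have hS : ∀ l, correlation P a b l + correlation P a b' l + correlation P a' b l
      - correlation P a' b' l ≤ 2 := fun l => by
    simp only [correlation_eq_meanA_mul_meanB hL hJC a _ b]
    exact chsh_le_two (hP.abs_meanA_le_one a b l) (hP.abs_meanA_le_one a' b l)
      (hP.abs_meanB_le_one a b l) (hP.abs_meanB_le_one a b' l)
  have i := hP.integrable_correlation (μ := μ)
  calc (∫ l, correlation P a b l ∂μ) + (∫ l, correlation P a b' l ∂μ)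
        + (∫ l, correlation P a' b l ∂μ) - (∫ l, correlation P a' b' l ∂μ)
      = ∫ l, (correlation P a b l + correlation P a b' l + correlation P a' b l
          - correlation P a' b' l) ∂μ := by
        rw [integral_sub ?_ (i a' b'), integral_add ?_ (i a' b), integral_add (i a b) (i a b')]
        · exact (i a b).add (i a b')
        · exact ((i a b).add (i a b')).add (i a' b)
    _ ≤ ∫ _, (2 : ℝ) ∂μ :=
        integral_mono ((((i a b).add (i a b')).add (i a' b)).sub (i a' b')) (integrable_const 2) hS
    _ = 2 := by simp

end Measurable

end Bell

/-- A rational stand-in for Tsirelson's optimal settings: the singlet correlations `-⟨a,b⟩`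
are `3/5, 4/5, 4/5, -3/5`, giving the CHSH value `14/5`. -/
theorem exists_unit_vectors_chsh_gt_two :
    ∃ a a' b b' : {v : EuclideanSpace ℝ (Fin 3) // ‖v‖ = 1},
      2 < -⟪(a : EuclideanSpace ℝ (Fin 3)), b⟫ - ⟪(a : EuclideanSpace ℝ (Fin 3)), b'⟫
        - ⟪(a' : EuclideanSpace ℝ (Fin 3)), b⟫ + ⟪(a' : EuclideanSpace ℝ (Fin 3)), b'⟫ := by
  refine ⟨⟨!₂[1, 0, 0], ?_⟩, ⟨!₂[0, 1, 0], ?_⟩, ⟨!₂[-3/5, -4/5, 0], ?_⟩, ⟨!₂[-4/5, 3/5, 0], ?_⟩, ?_⟩ <;>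
    norm_num [EuclideanSpace.norm_eq, PiLp.inner_apply, Fin.sum_univ_three, Matrix.cons_val_two,
      Matrix.tail_cons]

/-- **Bell's 1976 theorem in the form L&JC (via Jarrett's theorem):
quantum phenomena violate either locality or Jarrett-completeness.**
No stochastic model `P(A,B|a,b,λ)` over unit-vector settings (nonnegative, summing to `1`,
measurable in `λ`) that is both local (the marginal `P(A|a,b,λ) = Σ_B P(A,B|a,b,λ)` does not
depend on `b` and `P(B|a,b,λ) = Σ_A P(A,B|a,b,λ)` does not depend on `a`) and Jarrett-complete
(`P(A,B|a,b,λ) = P(A|a,b,λ)·P(B|a,b,λ)`) has predicted phenomenon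
`f(A,B|a,b) = ∫ P(A,B|a,b,λ) dμ(λ)` equal to the singlet phenomenon
`f_sing(A,B|a,b) = (1 − A·B·⟨a,b⟩)/4`. -/
theorem bell_1976_as_L_and_JC
    {Λ : Type*} [MeasurableSpace Λ] (μ : Measure Λ) [IsProbabilityMeasure μ]
    (P : ℝ → ℝ → {v : EuclideanSpace ℝ (Fin 3) // ‖v‖ = 1} →
      {v : EuclideanSpace ℝ (Fin 3) // ‖v‖ = 1} → Λ → ℝ)
    (hP_nonneg : ∀ A B, (A = 1 ∨ A = -1) → (B = 1 ∨ B = -1) → ∀ a b l, 0 ≤ P A B a b l)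
    (hP_sum : ∀ a b l,
      P 1 1 a b l + P 1 (-1) a b l + P (-1) 1 a b l + P (-1) (-1) a b l = 1)
    (hP_meas : ∀ A B, (A = 1 ∨ A = -1) → (B = 1 ∨ B = -1) → ∀ a b,
      Measurable fun l => P A B a b l)
    (hlocA : ∀ A, (A = 1 ∨ A = -1) → ∀ a b b' l,
      P A 1 a b l + P A (-1) a b l = P A 1 a b' l + P A (-1) a b' l)
    (hlocB : ∀ B, (B = 1 ∨ B = -1) → ∀ a a' b l,
      P 1 B a b l + P (-1) B a b l = P 1 B a' b l + P (-1) B a' b l)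
    (hJC : ∀ A B, (A = 1 ∨ A = -1) → (B = 1 ∨ B = -1) → ∀ a b l,
      P A B a b l
        = (P A 1 a b l + P A (-1) a b l) * (P 1 B a b l + P (-1) B a b l)) :
    ¬ ∀ A B, (A = 1 ∨ A = -1) → (B = 1 ∨ B = -1) →
        ∀ (a b : {v : EuclideanSpace ℝ (Fin 3) // ‖v‖ = 1}),
          (∫ l, P A B a b l ∂μ)
            = (1 - A * B * ⟪(a : EuclideanSpace ℝ (Fin 3)), (b : EuclideanSpace ℝ (Fin 3))⟫) / 4 := by
  intro hsinglet
  have hP : Bell.IsStochasticModel P := ⟨hP_nonneg, hP_sum, hP_meas⟩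
  have hE : ∀ a b, ∫ l, Bell.correlation P a b l ∂μ
      = -⟪(a : EuclideanSpace ℝ (Fin 3)), (b : EuclideanSpace ℝ (Fin 3))⟫ := fun a b =>
    hP.integral_correlation_eq_neg fun A B hA hB => hsinglet A B hA hB a b
  obtain ⟨a, a', b, b', hviolation⟩ := exists_unit_vectors_chsh_gt_two
  have hCHSH := Bell.chsh_integral_le_two (μ := μ) hP ⟨hlocA, hlocB⟩ hJC a a' b b'
  rw [hE, hE, hE, hE] at hCHSH
  linarith
end

section
/- There is no stochastic model that is both deterministic and fragilely local whose predicted phenomenon equals the singlet phenomenon f_sing(A,B|a,b) = (1 − A·B·⟨a,b⟩)/4 over unit-vector settings a, b ∈ ℝ³. That is, quantum phenomena violate either fragile locality or determinism. -/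
open MeasureTheory
open scoped RealInnerProductSpace

/-!
Determinism and normalisation make each `P(·,·|a,b,λ)` a point mass, so its marginals are `0` or
`1` and fragile locality applies to them: the first outcome `σ_a(λ) = s(1|a,λ) - s(-1|a,λ) ∈ {±1}`
depends only on `a`, the second `τ_b(λ)` only on `b`, and the conditional mean of `AB` is
`σ_a τ_b`. Integrating, the singlet gives `∫ σ_a τ_b = -⟪a,b⟫`; at `a = b` this is `-1`, which
forces `τ_a = -σ_a` almost everywhere, so `∫ σ_a σ_b = ⟪a,b⟫`. The pointwise inequality
`xy - xz ≤ 1 - yz` for signs then gives Bell's inequality `⟪a,b⟫ - ⟪a,c⟫ ≤ 1 - ⟪b,c⟫` for all unit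
vectors, which fails for suitable coplanar `a`, `b`, `c`.
-/

def IsSign (x : ℝ) : Prop := x = 1 ∨ x = -1

namespace IsSign

theorem mul {x y : ℝ} (hx : IsSign x) (hy : IsSign y) : IsSign (x * y) := by
  rcases hx with rfl | rfl <;> rcases hy with rfl | rfl <;> norm_num [IsSign]

theorem abs_le_one {x : ℝ} (hx : IsSign x) : |x| ≤ 1 := by
  rcases hx with rfl | rfl <;> norm_num

theorem mul_sub_mul_le {x y z : ℝ} (hx : IsSign x) (hy : IsSign y) (hz : IsSign z) :
    x * y - x * z ≤ 1 - y * z := by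
  rcases hx with rfl | rfl <;> rcases hy with rfl | rfl <;> rcases hz with rfl | rfl <;> norm_num

end IsSign

/-- `q A B` stands for the probability of the outcome pair `(A, B) ∈ {1, -1}²`; its values
elsewhere play no role. -/
def meanA (q : ℝ → ℝ → ℝ) : ℝ := q 1 1 + q 1 (-1) - (q (-1) 1 + q (-1) (-1))

def meanB (q : ℝ → ℝ → ℝ) : ℝ := q 1 1 + q (-1) 1 - (q 1 (-1) + q (-1) (-1))

def meanAB (q : ℝ → ℝ → ℝ) : ℝ := q 1 1 - q 1 (-1) - q (-1) 1 + q (-1) (-1)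

structure IsDeterministic (q : ℝ → ℝ → ℝ) : Prop where
  zero_or_one : ∀ A B, IsSign A → IsSign B → q A B = 0 ∨ q A B = 1
  sum_eq_one : q 1 1 + q 1 (-1) + q (-1) 1 + q (-1) (-1) = 1

namespace IsDeterministic

variable {q : ℝ → ℝ → ℝ}

theorem four_cases (hq : IsDeterministic q) :
    (q 1 1 = 1 ∧ q 1 (-1) = 0 ∧ q (-1) 1 = 0 ∧ q (-1) (-1) = 0) ∨
    (q 1 1 = 0 ∧ q 1 (-1) = 1 ∧ q (-1) 1 = 0 ∧ q (-1) (-1) = 0) ∨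
    (q 1 1 = 0 ∧ q 1 (-1) = 0 ∧ q (-1) 1 = 1 ∧ q (-1) (-1) = 0) ∨
    (q 1 1 = 0 ∧ q 1 (-1) = 0 ∧ q (-1) 1 = 0 ∧ q (-1) (-1) = 1) := by
  have hsum := hq.sum_eq_one
  rcases hq.zero_or_one 1 1 (.inl rfl) (.inl rfl) with h₁ | h₁ <;>
  rcases hq.zero_or_one 1 (-1) (.inl rfl) (.inr rfl) with h₂ | h₂ <;>
  rcases hq.zero_or_one (-1) 1 (.inr rfl) (.inl rfl) with h₃ | h₃ <;>
  rcases hq.zero_or_one (-1) (-1) (.inr rfl) (.inr rfl) with h₄ | h₄ <;>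
  simp only [h₁, h₂, h₃, h₄] at hsum ⊢ <;> revert hsum <;> norm_num

theorem marginalA_zero_or_one (hq : IsDeterministic q) {A : ℝ} (hA : IsSign A) :
    q A 1 + q A (-1) = 0 ∨ q A 1 + q A (-1) = 1 := by
  rcases hA with rfl | rfl <;> rcases hq.four_cases with h | h | h | h <;> simp [h]

theorem marginalB_zero_or_one (hq : IsDeterministic q) {B : ℝ} (hB : IsSign B) :
    q 1 B + q (-1) B = 0 ∨ q 1 B + q (-1) B = 1 := by
  rcases hB with rfl | rfl <;> rcases hq.four_cases with h | h | h | h <;> simp [h]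

theorem isSign_meanA (hq : IsDeterministic q) : IsSign (meanA q) := by
  rcases hq.four_cases with h | h | h | h <;> norm_num [meanA, IsSign, h]

theorem isSign_meanB (hq : IsDeterministic q) : IsSign (meanB q) := by
  rcases hq.four_cases with h | h | h | h <;> norm_num [meanB, IsSign, h]

theorem meanAB_eq_meanA_mul_meanB (hq : IsDeterministic q) : meanAB q = meanA q * meanB q := by
  rcases hq.four_cases with h | h | h | h <;> norm_num [meanAB, meanA, meanB, h]

theorem meanA_eq_of_marginalA (hq : IsDeterministic q) {s : ℝ → ℝ}
    (hs : ∀ A, IsSign A → (q A 1 + q A (-1) = 0 ∨ q A 1 + q A (-1) = 1) →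
      q A 1 + q A (-1) = s A) :
    meanA q = s 1 - s (-1) := by
  rw [meanA, hs 1 (.inl rfl) (hq.marginalA_zero_or_one (.inl rfl)),
    hs (-1) (.inr rfl) (hq.marginalA_zero_or_one (.inr rfl))]

theorem meanB_eq_of_marginalB (hq : IsDeterministic q) {r : ℝ → ℝ}
    (hr : ∀ B, IsSign B → (q 1 B + q (-1) B = 0 ∨ q 1 B + q (-1) B = 1) →
      q 1 B + q (-1) B = r B) :
    meanB q = r 1 - r (-1) := by
  rw [meanB, hr 1 (.inl rfl) (hq.marginalB_zero_or_one (.inl rfl)),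
    hr (-1) (.inr rfl) (hq.marginalB_zero_or_one (.inr rfl))]

end IsDeterministic

theorem meanAB_eq_neg_of_singlet {q : ℝ → ℝ → ℝ} {c : ℝ}
    (hq : ∀ A B, IsSign A → IsSign B → q A B = (1 - A * B * c) / 4) : meanAB q = -c := by
  rw [meanAB, hq 1 1 (.inl rfl) (.inl rfl), hq 1 (-1) (.inl rfl) (.inr rfl),
    hq (-1) 1 (.inr rfl) (.inl rfl), hq (-1) (-1) (.inr rfl) (.inr rfl)]
  ring

section SignValued

variable {Λ : Type*} [MeasurableSpace Λ] {μ : Measure Λ} {X Y Z : Λ → ℝ}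

theorem integrable_of_isSign [IsFiniteMeasure μ] (hXm : Measurable X) (hX : ∀ l, IsSign (X l)) :
    Integrable X μ :=
  .of_bound hXm.aestronglyMeasurable 1 (.of_forall fun l => (hX l).abs_le_one)

theorem integrable_mul_of_isSign [IsFiniteMeasure μ] (hXm : Measurable X) (hYm : Measurable Y)
    (hX : ∀ l, IsSign (X l)) (hY : ∀ l, IsSign (Y l)) : Integrable (fun l => X l * Y l) μ :=
  integrable_of_isSign (hXm.mul hYm) fun l => (hX l).mul (hY l)

theorem measurable_meanA {q : Λ → ℝ → ℝ → ℝ}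
    (hq : ∀ A B, IsSign A → IsSign B → Measurable fun l => q l A B) :
    Measurable fun l => meanA (q l) :=
  ((hq 1 1 (.inl rfl) (.inl rfl)).add (hq 1 (-1) (.inl rfl) (.inr rfl))).sub
    ((hq (-1) 1 (.inr rfl) (.inl rfl)).add (hq (-1) (-1) (.inr rfl) (.inr rfl)))

theorem measurable_meanB {q : Λ → ℝ → ℝ → ℝ}
    (hq : ∀ A B, IsSign A → IsSign B → Measurable fun l => q l A B) :
    Measurable fun l => meanB (q l) :=
  ((hq 1 1 (.inl rfl) (.inl rfl)).add (hq (-1) 1 (.inr rfl) (.inl rfl))).sub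
    ((hq 1 (-1) (.inl rfl) (.inr rfl)).add (hq (-1) (-1) (.inr rfl) (.inr rfl)))

theorem integral_meanAB {q : Λ → ℝ → ℝ → ℝ}
    (hq : ∀ A B, IsSign A → IsSign B → Integrable (fun l => q l A B) μ) :
    ∫ l, meanAB (q l) ∂μ = meanAB fun A B => ∫ l, q l A B ∂μ := by
  have h₁ := hq 1 1 (.inl rfl) (.inl rfl)
  have h₂ := hq 1 (-1) (.inl rfl) (.inr rfl)
  have h₃ := hq (-1) 1 (.inr rfl) (.inl rfl)
  have h₄ := hq (-1) (-1) (.inr rfl) (.inr rfl)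
  simp only [meanAB]
  rw [integral_add (by exact (h₁.sub h₂).sub h₃) h₄, integral_sub (by exact h₁.sub h₂) h₃,
    integral_sub h₁ h₂]

variable [IsProbabilityMeasure μ]

theorem integral_mul_sub_integral_mul_le (hXm : Measurable X) (hYm : Measurable Y)
    (hZm : Measurable Z) (hX : ∀ l, IsSign (X l)) (hY : ∀ l, IsSign (Y l))
    (hZ : ∀ l, IsSign (Z l)) :
    ∫ l, X l * Y l ∂μ - ∫ l, X l * Z l ∂μ ≤ 1 - ∫ l, Y l * Z l ∂μ := by
  have hXY := integrable_mul_of_isSign (μ := μ) hXm hYm hX hY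
  have hXZ := integrable_mul_of_isSign (μ := μ) hXm hZm hX hZ
  have hYZ := integrable_mul_of_isSign (μ := μ) hYm hZm hY hZ
  calc ∫ l, X l * Y l ∂μ - ∫ l, X l * Z l ∂μ = ∫ l, (X l * Y l - X l * Z l) ∂μ :=
        (integral_sub hXY hXZ).symm
    _ ≤ ∫ l, (1 - Y l * Z l) ∂μ := integral_mono (hXY.sub hXZ) ((integrable_const 1).sub hYZ)
        fun l => (hX l).mul_sub_mul_le (hY l) (hZ l)
    _ = 1 - ∫ l, Y l * Z l ∂μ := by rw [integral_sub (integrable_const 1) hYZ]; simp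

theorem ae_eq_neg_of_integral_mul_eq_neg_one (hXm : Measurable X) (hYm : Measurable Y)
    (hX : ∀ l, IsSign (X l)) (hY : ∀ l, IsSign (Y l)) (hXY : ∫ l, X l * Y l ∂μ = -1) :
    Y =ᵐ[μ] -X := by
  have hXYi := integrable_mul_of_isSign (μ := μ) hXm hYm hX hY
  have hnonneg : 0 ≤ fun l => 1 + X l * Y l := fun l => by
    rcases hX l with h | h <;> rcases hY l with h' | h' <;> simp [h, h']
  have hzero : ∫ l, (1 + X l * Y l) ∂μ = 0 := by
    rw [integral_add (integrable_const 1) hXYi, hXY]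
    simp
  have hint := (integrable_const 1).add hXYi
  filter_upwards [(integral_eq_zero_iff_of_nonneg hnonneg hint).mp hzero] with l hl
  rcases hX l with h | h <;> rcases hY l with h' | h' <;> simp_all

end SignValued

section Anticorrelated

variable {Λ S : Type*} [MeasurableSpace Λ] {μ : Measure Λ} [IsProbabilityMeasure μ]
  {σ τ : S → Λ → ℝ}

theorem bell_inequality_of_perfect_anticorrelation (hσm : ∀ a, Measurable (σ a))
    (hτm : ∀ b, Measurable (τ b)) (hσ : ∀ a l, IsSign (σ a l)) (hτ : ∀ b l, IsSign (τ b l))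
    (hanti : ∀ a, ∫ l, σ a l * τ a l ∂μ = -1) (a b c : S) :
    ∫ l, σ a l * τ c l ∂μ - ∫ l, σ a l * τ b l ∂μ ≤ 1 + ∫ l, σ b l * τ c l ∂μ := by
  have hσσ : ∀ a b, ∫ l, σ a l * σ b l ∂μ = -∫ l, σ a l * τ b l ∂μ := fun a b => by
    rw [← integral_neg]
    refine integral_congr_ae ?_
    filter_upwards [ae_eq_neg_of_integral_mul_eq_neg_one (hσm b) (hτm b) (hσ b) (hτ b) (hanti b)]
      with l hl
    simp [hl]
  have := integral_mul_sub_integral_mul_le (μ := μ) (hσm a) (hσm b) (hσm c) (hσ a) (hσ b) (hσ c)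
  rw [hσσ, hσσ, hσσ] at this
  linarith

end Anticorrelated

section Plane

variable {E : Type*} [NormedAddCommGroup E] [InnerProductSpace ℝ E]

theorem inner_smul_add_smul_of_orthonormal {e f : E} (he : ‖e‖ = 1) (hf : ‖f‖ = 1)
    (hef : ⟪e, f⟫ = 0) (x y x' y' : ℝ) :
    ⟪x • e + y • f, x' • e + y' • f⟫ = x * x' + y * y' := by
  have hfe : ⟪f, e⟫ = 0 := by rw [real_inner_comm, hef]
  simp only [inner_add_left, inner_add_right, real_inner_smul_left, real_inner_smul_right,
    real_inner_self_eq_norm_sq, he, hf, hef, hfe]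
  ring

/-- Take `a = e` and `b`, `c` at angles `θ`, `2θ` from it, with `cos θ = 3/5`:
then `⟪a, b⟫ - ⟪a, c⟫ = 22/25 > 2/5 = 1 - ⟪b, c⟫`. -/
theorem exists_unit_vectors_bell_violation {e f : E} (he : ‖e‖ = 1) (hf : ‖f‖ = 1)
    (hef : ⟪e, f⟫ = 0) :
    ∃ a b c : E, ‖a‖ = 1 ∧ ‖b‖ = 1 ∧ ‖c‖ = 1 ∧ 1 - ⟪b, c⟫ < ⟪a, b⟫ - ⟪a, c⟫ := by
  have hinner := inner_smul_add_smul_of_orthonormal he hf hef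
  have hnorm : ∀ x y : ℝ, x * x + y * y = 1 → ‖x • e + y • f‖ = 1 := fun x y h => by
    rw [← sq_eq_sq₀ (norm_nonneg _) zero_le_one, ← real_inner_self_eq_norm_sq, hinner, h, one_pow]
  refine ⟨(1 : ℝ) • e + (0 : ℝ) • f, (3 / 5 : ℝ) • e + (4 / 5 : ℝ) • f,
    (-7 / 25 : ℝ) • e + (24 / 25 : ℝ) • f, hnorm _ _ (by norm_num), hnorm _ _ (by norm_num),
    hnorm _ _ (by norm_num), ?_⟩
  rw [hinner, hinner, hinner]
  norm_num

end Plane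

theorem bell_1964_as_FL_and_D_general
    {Λ : Type*} [MeasurableSpace Λ] (μ : Measure Λ) [IsProbabilityMeasure μ]
    (P : ℝ → ℝ → {v : EuclideanSpace ℝ (Fin 3) // ‖v‖ = 1} →
      {v : EuclideanSpace ℝ (Fin 3) // ‖v‖ = 1} → Λ → ℝ)
    (hP_sum : ∀ a b l,
      P 1 1 a b l + P 1 (-1) a b l + P (-1) 1 a b l + P (-1) (-1) a b l = 1)
    (hP_meas : ∀ A B, (A = 1 ∨ A = -1) → (B = 1 ∨ B = -1) → ∀ a b,
      Measurable fun l => P A B a b l)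
    (hdet : ∀ A B, (A = 1 ∨ A = -1) → (B = 1 ∨ B = -1) → ∀ a b l,
      P A B a b l = 0 ∨ P A B a b l = 1)
    (r : ℝ → {v : EuclideanSpace ℝ (Fin 3) // ‖v‖ = 1} → Λ → ℝ)
    (s : ℝ → {v : EuclideanSpace ℝ (Fin 3) // ‖v‖ = 1} → Λ → ℝ)
    (hr : ∀ B, (B = 1 ∨ B = -1) → ∀ a b l,
      (P 1 B a b l + P (-1) B a b l = 0 ∨ P 1 B a b l + P (-1) B a b l = 1) →
        P 1 B a b l + P (-1) B a b l = r B b l)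
    (hs : ∀ A, (A = 1 ∨ A = -1) → ∀ a b l,
      (P A 1 a b l + P A (-1) a b l = 0 ∨ P A 1 a b l + P A (-1) a b l = 1) →
        P A 1 a b l + P A (-1) a b l = s A a l) :
    ¬ ∀ A B, (A = 1 ∨ A = -1) → (B = 1 ∨ B = -1) →
        ∀ (a b : {v : EuclideanSpace ℝ (Fin 3) // ‖v‖ = 1}),
          (∫ l, P A B a b l ∂μ)
            = (1 - A * B * ⟪(a : EuclideanSpace ℝ (Fin 3)), (b : EuclideanSpace ℝ (Fin 3))⟫) / 4 := by
  intro hsinglet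
  have hq : ∀ a b l, IsDeterministic fun A B => P A B a b l := fun a b l =>
    ⟨fun A B hA hB => hdet A B hA hB a b l, hP_sum a b l⟩
  set σ := fun a l => s 1 a l - s (-1) a l
  set τ := fun b l => r 1 b l - r (-1) b l
  have hσ : ∀ a b l, meanA (fun A B => P A B a b l) = σ a l := fun a b l =>
    (hq a b l).meanA_eq_of_marginalA fun A hA => hs A hA a b l
  have hτ : ∀ a b l, meanB (fun A B => P A B a b l) = τ b l := fun a b l =>
    (hq a b l).meanB_eq_of_marginalB fun B hB => hr B hB a b l
  have hσm : ∀ a, Measurable (σ a) := fun a => by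
    simpa only [hσ a a] using measurable_meanA fun A B hA hB => hP_meas A B hA hB a a
  have hτm : ∀ b, Measurable (τ b) := fun b => by
    simpa only [hτ b b] using measurable_meanB fun A B hA hB => hP_meas A B hA hB b b
  have hPi : ∀ A B, IsSign A → IsSign B → ∀ a b, Integrable (fun l => P A B a b l) μ :=
    fun A B hA hB a b => .of_bound (hP_meas A B hA hB a b).aestronglyMeasurable 1
      (.of_forall fun l => by rcases hdet A B hA hB a b l with h | h <;> simp [h])
  have hcorr : ∀ a b, ∫ l, σ a l * τ b l ∂μ = -⟪(a : EuclideanSpace ℝ (Fin 3)), b⟫ := by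
    intro a b
    simp only [← hσ a b, ← hτ a b, ← (hq a b _).meanAB_eq_meanA_mul_meanB]
    rw [integral_meanAB fun A B hA hB => hPi A B hA hB a b]
    exact meanAB_eq_neg_of_singlet fun A B hA hB => hsinglet A B hA hB a b
  have hbell := bell_inequality_of_perfect_anticorrelation hσm hτm
    (fun a l => hσ a a l ▸ (hq a a l).isSign_meanA) (fun b l => hτ b b l ▸ (hq b b l).isSign_meanB)
    fun a => by rw [hcorr, real_inner_self_eq_norm_sq, a.2, one_pow]
  have hbasis := (EuclideanSpace.basisFun (Fin 3) ℝ).orthonormal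
  obtain ⟨a, b, c, ha, hb, hc, hviolation⟩ :=
    exists_unit_vectors_bell_violation (hbasis.1 0) (hbasis.1 1)
      (hbasis.2 (by decide : (0 : Fin 3) ≠ 1))
  have := hbell ⟨a, ha⟩ ⟨b, hb⟩ ⟨c, hc⟩
  simp only [hcorr] at this
  linarith

/-- **Bell's 1964 theorem in the form FL&D:
quantum phenomena violate either fragile locality or determinism.**
No stochastic model `P(A,B|a,b,λ)` over unit-vector settings (summing to `1`, measurable
in `λ`) that is both deterministic (`P(A,B|a,b,λ) ∈ {0,1}`) and fragilely local (there are
functions `r(B|b,λ)` and `s(A|a,λ)`, measurable in `λ`, such that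
`P(B|a,b,λ) ∈ {0,1}` implies `P(B|a,b,λ) = r(B|b,λ)` and `P(A|a,b,λ) ∈ {0,1}` implies
`P(A|a,b,λ) = s(A|a,λ)`, where `P(A|a,b,λ) = Σ_B P(A,B|a,b,λ)` and
`P(B|a,b,λ) = Σ_A P(A,B|a,b,λ)`) has predicted phenomenon
`f(A,B|a,b) = ∫ P(A,B|a,b,λ) dμ(λ)` equal to the singlet phenomenon
`f_sing(A,B|a,b) = (1 − A·B·⟨a,b⟩)/4`. -/
theorem bell_1964_as_FL_and_D
    {Λ : Type*} [MeasurableSpace Λ] (μ : Measure Λ) [IsProbabilityMeasure μ]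
    (P : ℝ → ℝ → {v : EuclideanSpace ℝ (Fin 3) // ‖v‖ = 1} →
      {v : EuclideanSpace ℝ (Fin 3) // ‖v‖ = 1} → Λ → ℝ)
    (hP_sum : ∀ a b l,
      P 1 1 a b l + P 1 (-1) a b l + P (-1) 1 a b l + P (-1) (-1) a b l = 1)
    (hP_meas : ∀ A B, (A = 1 ∨ A = -1) → (B = 1 ∨ B = -1) → ∀ a b,
      Measurable fun l => P A B a b l)
    (hdet : ∀ A B, (A = 1 ∨ A = -1) → (B = 1 ∨ B = -1) → ∀ a b l,
      P A B a b l = 0 ∨ P A B a b l = 1)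
    (r : ℝ → {v : EuclideanSpace ℝ (Fin 3) // ‖v‖ = 1} → Λ → ℝ)
    (s : ℝ → {v : EuclideanSpace ℝ (Fin 3) // ‖v‖ = 1} → Λ → ℝ)
    (hr_meas : ∀ B b, Measurable fun l => r B b l)
    (hs_meas : ∀ A a, Measurable fun l => s A a l)
    (hr : ∀ B, (B = 1 ∨ B = -1) → ∀ a b l,
      (P 1 B a b l + P (-1) B a b l = 0 ∨ P 1 B a b l + P (-1) B a b l = 1) →
        P 1 B a b l + P (-1) B a b l = r B b l)
    (hs : ∀ A, (A = 1 ∨ A = -1) → ∀ a b l,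
      (P A 1 a b l + P A (-1) a b l = 0 ∨ P A 1 a b l + P A (-1) a b l = 1) →
        P A 1 a b l + P A (-1) a b l = s A a l) :
    ¬ ∀ A B, (A = 1 ∨ A = -1) → (B = 1 ∨ B = -1) →
        ∀ (a b : {v : EuclideanSpace ℝ (Fin 3) // ‖v‖ = 1}),
          (∫ l, P A B a b l ∂μ)
            = (1 - A * B * ⟪(a : EuclideanSpace ℝ (Fin 3)), (b : EuclideanSpace ℝ (Fin 3))⟫) / 4 :=
  bell_1964_as_FL_and_D_general μ P hP_sum hP_meas hdet r s hr hs
end
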